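/- arXiv:2308.02504 — 13 statements merged into one kernel-verified Lean document; each statement's English description precedes it below -/
import Mathlib

section
/- Let g be a vector space over a field k of characteristic 0 equipped with a skew-symmetric bilinear bracket [·,·]. Define the Jacobiator J(x,y,z) = [[x,y],z] + [[y,z],x] + [[z,x],y]. Then the Malcev identity J(x,y,[x,z]) = [J(x,y,z),x] holds for all x,y,z ∈ g if and only if the Sagle identity [[x,z],[y,t]] = [[[x,y],z],t] + [[[y,z],t],x] + [[[z,t],x],y] + [[[t,x],y],z] holds for all x,y,z,t ∈ g. -/
set_option maxHeartbeats 4000000 in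
/-- The Malcev identity `J(x,y,[x,z]) = [J(x,y,z),x]` is equivalent to Sagle's identity,
for a skew-symmetric bilinear bracket on a vector space over a field of characteristic 0. -/
theorem malcev_iff_sagle {k : Type*} [Field k] [CharZero k]
    {g : Type*} [AddCommGroup g] [Module k g]
    (br : g →ₗ[k] g →ₗ[k] g)
    (skew : ∀ x y : g, br x y = - br y x)
    (J : g → g → g → g)
    (hJ : ∀ x y z : g, J x y z = br (br x y) z + br (br y z) x + br (br z x) y) :
    (∀ x y z : g, J x y (br x z) = br (J x y z) x) ↔
    (∀ x y z t : g, br (br x z) (br y t) =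
        br (br (br x y) z) t + br (br (br y z) t) x +
        br (br (br z t) x) y + br (br (br t x) y) z) := by
  have hz : ∀ a : g, br a a = 0 := by
    intro a
    have h : (2:k) • br a a = 0 := by linear_combination (norm := module) skew a a
    simpa using (smul_eq_zero.mp h).resolve_left two_ne_zero
  have negL : ∀ X Y w : g, X = -Y → br X w = - br Y w := by
    intro X Y w h; rw [h]; simp
  have negR : ∀ X Y w : g, X = -Y → br w X = - br w Y := by
    intro X Y w h; rw [h]; simp
  have zeroL : ∀ X w : g, X = 0 → br X w = 0 := by
    intro X w h; rw [h]; simp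
  have zeroR : ∀ X w : g, X = 0 → br w X = 0 := by
    intro X w h; rw [h]; simp
  constructor
  · intro hM x y z t
    have e : ∀ a b c : g,
        br (br a b) (br a c) + br (br b (br a c)) a + br (br (br a c) a) b
          = br (br (br a b) c) a + br (br (br b c) a) a + br (br (br c a) b) a := by
      intro a b c
      have h := hM a b c
      rw [hJ, hJ] at h
      simp only [map_add, LinearMap.add_apply] at h
      linear_combination (norm := module) h
    have e1 := e (x+y) z t
    have e2 := e x z t
    have e3 := e y z t
    have e4 := e (x+z) t y
    have e5 := e x t y
    have e6 := e z t y
    have e7 := e (x+t) y z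
    have e8 := e x y z
    have e9 := e t y z
    simp only [map_add, LinearMap.add_apply] at e1 e4 e7
    linear_combination (norm := module)
        ((1:k)/2) • e1 - ((1:k)/2) • e2 - ((1:k)/2) • e3 - ((1:k)/2) • e4 + ((1:k)/2) • e5 + ((1:k)/2) • e6 + ((1:k)/2) • e7 - ((1:k)/2) • e8 - ((1:k)/2) • e9
        + ((1:k)/2) • (negR (br y t) (br t y) (br x z) (skew y t))
        - ((1:k)/2) • (skew (br x z) (br t y))
        - ((1:k)/2) • (negL (br (br z t) x) (br (br t z) x) y (negL (br z t) (br t z) x (skew z t)))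
        - ((1:k)/2) • (negR (br x t) (br t x) (br y z) (skew x t))
        + ((1:k)/2) • (skew (br y z) (br t x))
        - ((1:k)/2) • (negL (br z (br x t)) (br z (br t x)) y (negR (br x t) (br t x) z (skew x t)))
        + ((1:k)/2) • (negL (br z (br t x)) (br (br t x) z) y (skew z (br t x)))
        - ((1:k)/2) • (negL (br z (br y t)) (br z (br t y)) x (negR (br y t) (br t y) z (skew y t)))
        + ((1:k)/2) • (negL (br z (br t y)) (br (br t y) z) x (skew z (br t y)))
        - (1:k) • (negL (br (br x t) y) (br (br t x) y) z (negL (br x t) (br t x) y (skew x t)))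
        - ((1:k)/2) • (negL (br (br y t) x) (br (br t y) x) z (negL (br y t) (br t y) x (skew y t)))
        + ((1:k)/2) • (negL (br (br z t) y) (br (br t z) y) x (negL (br z t) (br t z) y (skew z t)))
        + ((1:k)/2) • (negL (br x t) (br t x) (br z y) (skew x t))
        - ((1:k)/2) • (negR (br z y) (br y z) (br t x) (skew z y))
        + ((1:k)/2) • (negL (br z t) (br t z) (br x y) (skew z t))
        + ((1:k)/2) • (negL (br t (br x y)) (br (br x y) t) z (skew t (br x y)))
        + ((1:k)/2) • (negL (br t (br z y)) (br t (br y z)) x (negR (br z y) (br y z) t (skew z y)))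
        - ((1:k)/2) • (negL (br t (br y z)) (br (br y z) t) x (skew t (br y z)))
        + ((1:k)/2) • (negL (br (br z y) x) (br (br y z) x) t (negL (br z y) (br y z) x (skew z y)))
        - ((1:k)/2) • (negL (br (br y x) t) (br (br x y) t) z (negL (br y x) (br x y) t (skew y x)))
        - ((1:k)/2) • (skew (br x y) (br t z))
        - ((1:k)/2) • (negL (br y (br x z)) (br (br x z) y) t (skew y (br x z)))
        - ((1:k)/2) • (negL (br y (br t z)) (br (br t z) y) x (skew y (br t z)))
        + ((1:k)/2) • (negL (br (br z x) y) (br (br x z) y) t (negL (br z x) (br x z) y (skew z x)))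
  · intro hS x y z
    rw [hJ, hJ]
    simp only [map_add, LinearMap.add_apply]
    have hs := hS x y z x
    linear_combination (norm := module)
        hs
        + (1:k) • (negL (br y (br x z)) (br (br x z) y) x (skew y (br x z)))
        - (1:k) • (negL (br (br z x) y) (br (br x z) y) x (negL (br z x) (br x z) y (skew z x)))
        - (1:k) • (negR (br y x) (br x y) (br x z) (skew y x))
        + (1:k) • (skew (br x z) (br x y))
        + (1:k) • (negL (br (br z x) x) (br (br x z) x) y (negL (br z x) (br x z) x (skew z x)))
        + (1:k) • (zeroL (br (br x x) y) z (zeroL (br x x) y (hz x)))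
end

section
/- Let g be a Malcev algebra over k and let ρ be a representation of g on a k-vector space M. Then the direct sum g ⊕ M equipped with the (non-skew-symmetric) bracket [(x,m),(y,n)]_H := ([x,y], ρ(x)(n)) is a left Malcev dialgebra, called the hemi-semidirect product of g and M. -/
/-- The hemi-semidirect product `g ⊕ M` of a Malcev algebra `g` and a representation `(M, ρ)`,
with bracket `[(x,m),(y,n)]_H = ([x,y], ρ(x)(n))`, is a left Malcev dialgebra. -/
theorem hemisemidirect_product_is_left_malcev_dialgebra {k g M : Type*} [Field k] [CharZero k]
    [AddCommGroup g] [Module k g] [AddCommGroup M] [Module k M]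
    (br : g →ₗ[k] g →ₗ[k] g)
    (skew : ∀ x y : g, br x y = - br y x)
    (sagle : ∀ x y z t : g, br (br x z) (br y t) =
        br (br (br x y) z) t + br (br (br y z) t) x +
        br (br (br z t) x) y + br (br (br t x) y) z)
    (ρ : g →ₗ[k] Module.End k M)
    (hρ : ∀ x y z : g, ρ (br (br x y) z) =
        ρ x * ρ y * ρ z - ρ z * ρ x * ρ y + ρ y * ρ (br z x) - ρ (br y z) * ρ x)
    (Br : g × M → g × M → g × M)
    (hBr : ∀ p q : g × M, Br p q = (br p.1 q.1, ρ p.1 q.2)) :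
    -- the bracket is bilinear
    ((∀ a b c : g × M, Br (a + b) c = Br a c + Br b c) ∧
     (∀ a b c : g × M, Br a (b + c) = Br a b + Br a c) ∧
     (∀ (r : k) (a b : g × M), Br (r • a) b = r • Br a b) ∧
     (∀ (r : k) (a b : g × M), Br a (r • b) = r • Br a b)) ∧
    -- left Malcev dialgebra identities
    (∀ a b c : g × M, Br (Br a b + Br b a) c = 0) ∧
    (∀ a b c d : g × M, Br a (Br b (Br c d)) =
        Br b (Br c (Br a d)) + Br c (Br (Br a b) d) +
        Br (Br a c) (Br b d) + Br (Br a (Br b c)) d) := by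
  have negR : ∀ (w : g) {u u' : g}, u = -u' → br w u = - br w u' := by
    intro w u u' h; rw [h, map_neg]
  have negL : ∀ (w : g) {u u' : g}, u = -u' → br u w = - br u' w := by
    intro w u u' h; rw [h, map_neg, LinearMap.neg_apply]
  have key : ∀ a b c d : g, br a (br b (br c d)) =
      br b (br c (br a d)) + br c (br (br a b) d) +
      br (br a c) (br b d) + br (br a (br b c)) d := by
    intro a b c d
    linear_combination (norm := module)
      (sagle b a d c)
      + (negR a (negR b (skew c d)))
      - (negR a (skew b (br d c)))
      + (skew a (br (br d c) b))
      - (negR b (skew c (br a d)))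
      + (skew b (br (br a d) c))
      - (negR c (skew d (br a b)))
      + (negR c (negR d (skew a b)))
      - (negR c (skew d (br b a)))
      + (skew c (br (br b a) d))
      - (skew d (br a (br b c)))
      + (negR d (negR a (skew b c)))
      - (negR d (skew a (br c b)))
      + (skew d (br (br c b) a))
      - (skew (br a c) (br b d))
      
  have keyM : ∀ a b c : g, ρ (br a (br b c)) =
      ρ a * ρ b * ρ c - ρ b * (ρ c * ρ a) - ρ c * ρ (br a b) - ρ (br a c) * ρ b := by
    intro a b c
    have e2 : ρ (br a (br b c)) = - ρ (br (br b c) a) := by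
      rw [skew a (br b c), map_neg]
    have e3 : ρ (br c a) = - ρ (br a c) := by rw [skew c a, map_neg]
    rw [e2, hρ b c a, e3]
    noncomm_ring
  refine ⟨⟨?_, ?_, ?_, ?_⟩, ?_, ?_⟩
  · intro a b c
    simp [hBr, Prod.ext_iff, map_add, LinearMap.add_apply]
  · intro a b c
    simp [hBr, Prod.ext_iff, map_add]
  · intro r a b
    simp [hBr, Prod.ext_iff, map_smul, LinearMap.smul_apply]
  · intro r a b
    simp [hBr, Prod.ext_iff, map_smul]
  · intro a b c
    have h1 : br a.1 b.1 + br b.1 a.1 = 0 := by rw [skew]; abel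
    simp [hBr, h1, Prod.ext_iff]
  · intro p q r s
    simp only [hBr, Prod.mk_add_mk, Prod.mk.injEq]
    refine ⟨key p.1 q.1 r.1 s.1, ?_⟩
    have h := LinearMap.congr_fun (keyM p.1 q.1 r.1) s.2
    simp only [Module.End.mul_apply, LinearMap.sub_apply] at h
    linear_combination (norm := module) -h
end

section
/- Let (M, g, T) be an embedding tensor on a Malcev algebra g with representation ρ on M. Then M equipped with the bracket [m,n]_M := ρ(T(m))(n) is a left Malcev dialgebra. -/
/-- Given an embedding tensor `(M, g, T)` on a Malcev algebra `g`, the bracket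
`[m,n]_M = ρ(T(m))(n)` makes `M` a left Malcev dialgebra. -/
theorem embedding_tensor_induces_left_malcev_dialgebra {k g M : Type*} [Field k] [CharZero k]
    [AddCommGroup g] [Module k g] [AddCommGroup M] [Module k M]
    (br : g →ₗ[k] g →ₗ[k] g)
    (skew : ∀ x y : g, br x y = - br y x)
    (sagle : ∀ x y z t : g, br (br x z) (br y t) =
        br (br (br x y) z) t + br (br (br y z) t) x +
        br (br (br z t) x) y + br (br (br t x) y) z)
    (ρ : g →ₗ[k] Module.End k M)
    (hρ : ∀ x y z : g, ρ (br (br x y) z) =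
        ρ x * ρ y * ρ z - ρ z * ρ x * ρ y + ρ y * ρ (br z x) - ρ (br y z) * ρ x)
    (T : M →ₗ[k] g)
    (hT : ∀ m n : M, br (T m) (T n) = T (ρ (T m) n))
    (brM : M → M → M)
    (hbrM : ∀ m n : M, brM m n = ρ (T m) n) :
    -- the bracket is bilinear
    ((∀ a b c : M, brM (a + b) c = brM a c + brM b c) ∧
     (∀ a b c : M, brM a (b + c) = brM a b + brM a c) ∧
     (∀ (r : k) (a b : M), brM (r • a) b = r • brM a b) ∧
     (∀ (r : k) (a b : M), brM a (r • b) = r • brM a b)) ∧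
    -- left Malcev dialgebra identities
    (∀ a b c : M, brM (brM a b + brM b a) c = 0) ∧
    (∀ a b c d : M, brM a (brM b (brM c d)) =
        brM b (brM c (brM a d)) + brM c (brM (brM a b) d) +
        brM (brM a c) (brM b d) + brM (brM a (brM b c)) d) := by
  refine ⟨⟨?_, ?_, ?_, ?_⟩, ?_, ?_⟩
  · intro a b c; simp [hbrM, map_add, LinearMap.add_apply]
  · intro a b c; simp [hbrM, map_add]
  · intro r a b; simp [hbrM, map_smul, LinearMap.smul_apply]
  · intro r a b; simp [hbrM, map_smul]
  · intro a b c
    rw [hbrM]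
    have hz : T (brM a b + brM b a) = 0 := by
      rw [map_add, hbrM, hbrM, ← hT, ← hT, skew (T a) (T b)]
      abel
    rw [hz]
    simp
  · intro a b c d
    simp only [hbrM, ← hT]
    rw [skew (T a) (T c), skew (T a) (br (T b) (T c))]
    simp only [map_neg, LinearMap.neg_apply]
    have h := LinearMap.congr_fun (hρ (T b) (T c) (T a)) d
    simp only [LinearMap.sub_apply, LinearMap.add_apply, Module.End.mul_apply] at h
    rw [h]
    abel
end

section
/- Let (M, g, T) be an embedding tensor on a Malcev algebra g with representation ρ on M, and let (V, W, T', ρ1, ρ2, ρ3) be a representation of (M, g, T). Define on g ⊕ W the bracket [(x,w1),(y,w2)] := ([x,y], ρ2(x)(w2) − ρ2(y)(w1)), define ρ̂ : g ⊕ W → End(M ⊕ V) by ρ̂(x,w)(m,v) := (ρ(x)(m), ρ1(x)(v) − ρ3(m)(w)), and define T̂ : M ⊕ V → g ⊕ W by T̂(m,v) := (T(m), T'(v)). Then g ⊕ W is a Malcev algebra, ρ̂ is a representation of g ⊕ W on M ⊕ V, and T̂ is an embedding tensor, i.e. [T̂(a),T̂(b)] = T̂(ρ̂(T̂(a))(b))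 for all a,b ∈ M ⊕ V. -/
/-- Semidirect product of an embedding tensor `(M, g, T)` on a Malcev algebra with a
representation `(V, W, T', ρ1, ρ2, ρ3)`: `g ⊕ W` is a Malcev algebra, `ρ̂` is a
representation of `g ⊕ W` on `M ⊕ V`, and `T̂ = T + T'` is an embedding tensor. -/
theorem semidirect_product_embedding_tensor {k g M V W : Type*} [Field k] [CharZero k]
    [AddCommGroup g] [Module k g] [AddCommGroup M] [Module k M]
    [AddCommGroup V] [Module k V] [AddCommGroup W] [Module k W]
    -- g is a Malcev algebra
    (br : g →ₗ[k] g →ₗ[k] g)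
    (skew : ∀ x y : g, br x y = - br y x)
    (sagle : ∀ x y z t : g, br (br x z) (br y t) =
        br (br (br x y) z) t + br (br (br y z) t) x +
        br (br (br z t) x) y + br (br (br t x) y) z)
    -- ρ is a representation of g on M
    (ρ : g →ₗ[k] Module.End k M)
    (hρ : ∀ x y z : g, ρ (br (br x y) z) =
        ρ x * ρ y * ρ z - ρ z * ρ x * ρ y + ρ y * ρ (br z x) - ρ (br y z) * ρ x)
    -- T is an embedding tensor
    (T : M →ₗ[k] g)
    (hT : ∀ m n : M, br (T m) (T n) = T (ρ (T m) n))
    -- ρ1, ρ2 are representations of g on V and W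
    (ρ1 : g →ₗ[k] Module.End k V)
    (hρ1 : ∀ x y z : g, ρ1 (br (br x y) z) =
        ρ1 x * ρ1 y * ρ1 z - ρ1 z * ρ1 x * ρ1 y + ρ1 y * ρ1 (br z x) - ρ1 (br y z) * ρ1 x)
    (ρ2 : g →ₗ[k] Module.End k W)
    (hρ2 : ∀ x y z : g, ρ2 (br (br x y) z) =
        ρ2 x * ρ2 y * ρ2 z - ρ2 z * ρ2 x * ρ2 y + ρ2 y * ρ2 (br z x) - ρ2 (br y z) * ρ2 x)
    -- T' is equivariant
    (T' : V →ₗ[k] W)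
    (hT' : ∀ (x : g) (v : V), T' (ρ1 x v) = ρ2 x (T' v))
    -- ρ3 and the compatibility conditions
    (ρ3 : M →ₗ[k] W →ₗ[k] V)
    (hρ3 : ∀ (m : M) (v : V), ρ2 (T m) (T' v) = T' (ρ3 m (T' v)))
    (hc1 : ∀ (x y : g) (w : W) (m : M),
        ρ3 m (ρ2 x (ρ2 y w)) - ρ1 x (ρ1 y (ρ3 m w)) + ρ1 y (ρ3 (ρ x m) w) +
        ρ3 (ρ y m) (ρ2 x w) + ρ3 (ρ (br x y) m) w = 0)
    (hc2 : ∀ (x y : g) (w : W) (m : M),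
        ρ3 m (ρ2 (br x y) w) - ρ1 x (ρ1 y (ρ3 m w)) + ρ3 (ρ x (ρ y m)) w +
        ρ1 y (ρ3 m (ρ2 x w)) + ρ3 (ρ x m) (ρ2 y w) = 0)
    (hc3 : ∀ (x y : g) (w : W) (m : M),
        ρ3 m (ρ2 x (ρ2 y w)) - ρ3 (ρ y (ρ x m)) w + ρ1 x (ρ3 (ρ y m) w) -
        ρ1 y (ρ3 m (ρ2 x w)) + ρ1 (br y x) (ρ3 m w) = 0)
    -- the semidirect product structure
    (Br : g × W → g × W → g × W)
    (hBr : ∀ a b : g × W, Br a b = (br a.1 b.1, ρ2 a.1 b.2 - ρ2 b.1 a.2))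
    (P : g × W → M × V → M × V)
    (hP : ∀ (a : g × W) (u : M × V), P a u = (ρ a.1 u.1, ρ1 a.1 u.2 - ρ3 u.1 a.2))
    (That : M × V → g × W)
    (hThat : ∀ u : M × V, That u = (T u.1, T' u.2)) :
    -- g ⊕ W is a Malcev algebra
    ((∀ a b c : g × W, Br (a + b) c = Br a c + Br b c) ∧
     (∀ a b c : g × W, Br a (b + c) = Br a b + Br a c) ∧
     (∀ (r : k) (a b : g × W), Br (r • a) b = r • Br a b) ∧
     (∀ (r : k) (a b : g × W), Br a (r • b) = r • Br a b) ∧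
     (∀ a b : g × W, Br a b = - Br b a) ∧
     (∀ a b c d : g × W, Br (Br a c) (Br b d) =
        Br (Br (Br a b) c) d + Br (Br (Br b c) d) a +
        Br (Br (Br c d) a) b + Br (Br (Br d a) b) c)) ∧
    -- ρ̂ is a representation of g ⊕ W on M ⊕ V
    ((∀ (a b : g × W) (u : M × V), P (a + b) u = P a u + P b u) ∧
     (∀ (r : k) (a : g × W) (u : M × V), P (r • a) u = r • P a u) ∧
     (∀ (a : g × W) (u v : M × V), P a (u + v) = P a u + P a v) ∧
     (∀ (r : k) (a : g × W) (u : M × V), P a (r • u) = r • P a u) ∧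
     (∀ (a b c : g × W) (u : M × V), P (Br (Br a b) c) u =
        P a (P b (P c u)) - P c (P a (P b u)) + P b (P (Br c a) u) - P (Br b c) (P a u))) ∧
    -- T̂ is an embedding tensor
    (∀ u v : M × V, Br (That u) (That v) = That (P (That u) v)) := by
    -- key lemma in W derived from hρ2 and skew
  have keyW : ∀ (x y z : g) (w : W), ρ2 (br x z) (ρ2 y w) =
      ρ2 (br (br x y) z) w - ρ2 x (ρ2 (br y z) w) + ρ2 y (ρ2 x (ρ2 z w))
        - ρ2 z (ρ2 y (ρ2 x w)) := by
    intro x y z w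
    have h := LinearMap.congr_fun (hρ2 y x z) w
    simp only [Module.End.mul_apply, LinearMap.sub_apply, LinearMap.add_apply] at h
    have f1 : ρ2 (br (br y x) z) w = - ρ2 (br (br x y) z) w := by
      rw [skew y x]; simp
    have f2 : ρ2 x (ρ2 (br z y) w) = - ρ2 x (ρ2 (br y z) w) := by
      rw [skew z y]; simp
    linear_combination (norm := module) h - f1 + f2
  refine ⟨⟨?_, ?_, ?_, ?_, ?_, ?_⟩, ⟨?_, ?_, ?_, ?_, ?_⟩, ?_⟩
  · intro a b c
    simp [hBr, Prod.ext_iff]; abel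
  · intro a b c
    simp [hBr, Prod.ext_iff]; abel
  · intro r a b
    simp [hBr, Prod.ext_iff, smul_sub]
  · intro r a b
    simp [hBr, Prod.ext_iff, smul_sub]
  · intro a b
    simp [hBr, Prod.ext_iff, skew a.1 b.1]
  · rintro ⟨x, p⟩ ⟨y, q⟩ ⟨z, r⟩ ⟨t, s⟩
    simp only [hBr, Prod.mk_add_mk, Prod.ext_iff, map_sub, map_add, LinearMap.sub_apply,
      LinearMap.add_apply, map_neg, LinearMap.neg_apply]
    constructor
    · exact sagle x y z t
    · have e1 : ρ2 (br x z) (ρ2 t q) = - ρ2 (br z x) (ρ2 t q) := by rw [skew x z]; simp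
      have e2 : ρ2 (br y t) (ρ2 x r) = - ρ2 (br t y) (ρ2 x r) := by rw [skew y t]; simp
      linear_combination (norm := module) keyW x y z s + keyW y z t p + keyW z t x q +
        keyW t x y r - e1 - e2
  · intro a b u
    simp [hP, Prod.ext_iff]; abel
  · intro r a u
    simp [hP, Prod.ext_iff, smul_sub]
  · intro a u v
    simp [hP, Prod.ext_iff]; abel
  · intro r a u
    simp [hP, Prod.ext_iff, smul_sub]
  · rintro ⟨x, p⟩ ⟨y, q⟩ ⟨z, r⟩ ⟨m, v⟩
    simp only [hBr, hP, Prod.ext_iff, Prod.fst_sub, Prod.snd_sub, Prod.fst_add, Prod.snd_add,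
      map_sub, map_add, LinearMap.sub_apply, LinearMap.add_apply]
    constructor
    · have h := LinearMap.congr_fun (hρ x y z) m
      simp only [Module.End.mul_apply, LinearMap.sub_apply, LinearMap.add_apply] at h
      linear_combination (norm := module) h
    · have h1 := LinearMap.congr_fun (hρ1 x y z) v
      simp only [Module.End.mul_apply, LinearMap.sub_apply, LinearMap.add_apply] at h1
      linear_combination (norm := module) h1 - hc2 x y r m + hc1 z x q m - hc3 z y p m
  · rintro ⟨m, v⟩ ⟨n, v2⟩
    simp only [hBr, hP, hThat, Prod.ext_iff, map_sub]
    exact ⟨hT m n, by rw [hT' (T m) v2, hρ3 n v]⟩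
end

section
/- Let (M, g, T) be an embedding tensor on a Malcev algebra g with representation ρ on M, let (V, W, T', ρ1, ρ2, ρ3) be a representation of (M, g, T), and let θ : M → W be linear, ω : g × g → W skew-symmetric bilinear, and ν : g × M → V bilinear. Define on g ⊕ W the bracket [(x,w1),(y,w2)]_ω := ([x,y], ω(x,y) + ρ2(x)(w2) − ρ2(y)(w1)), define ρ̂_ν(x,w)(m,v) := (ρ(x)(m), ν(x,m) + ρ1(x)(v) − ρ3(m)(w)), and define T̂_θ(m,v) := (T(m), θ(m) + T'(v)). Then T̂_θ satisfies the embedding tensor identity [T̂_θ(a), T̂_θ(b)]_ω = T̂_θ(ρ̂_ν(T̂_θ(a))(b)) for all a,b ∈ M ⊕ V if and only if for all m,n ∈ M: ρ2(T(m))(θ(n)) − ρ2(T(n))(θ(m)) + ω(T(m),T(n)) − T'(ν(T(m),n)) − θ(ρ(T(m))(n)) + T'(ρ3(n)(θ(m))) = 0. -/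
/-- The twisted map `T̂_θ` satisfies the embedding tensor identity for the twisted bracket
`[·,·]_ω` and twisted action `ρ̂_ν` if and only if the 2-cocycle condition
`ρ2(T(m))(θ(n)) − ρ2(T(n))(θ(m)) + ω(T(m),T(n)) − T'(ν(T(m),n)) − θ(ρ(T(m))(n)) + T'(ρ3(n)(θ(m))) = 0` holds. -/
theorem twisted_embedding_tensor_iff_cocycle {k g M V W : Type*} [Field k] [CharZero k]
    [AddCommGroup g] [Module k g] [AddCommGroup M] [Module k M]
    [AddCommGroup V] [Module k V] [AddCommGroup W] [Module k W]
    -- g is a Malcev algebra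
    (br : g →ₗ[k] g →ₗ[k] g)
    (skew : ∀ x y : g, br x y = - br y x)
    (sagle : ∀ x y z t : g, br (br x z) (br y t) =
        br (br (br x y) z) t + br (br (br y z) t) x +
        br (br (br z t) x) y + br (br (br t x) y) z)
    -- ρ is a representation of g on M
    (ρ : g →ₗ[k] Module.End k M)
    (hρ : ∀ x y z : g, ρ (br (br x y) z) =
        ρ x * ρ y * ρ z - ρ z * ρ x * ρ y + ρ y * ρ (br z x) - ρ (br y z) * ρ x)
    -- T is an embedding tensor
    (T : M →ₗ[k] g)
    (hT : ∀ m n : M, br (T m) (T n) = T (ρ (T m) n))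
    -- (V, W, T', ρ1, ρ2, ρ3) is a representation of (M, g, T)
    (ρ1 : g →ₗ[k] Module.End k V)
    (hρ1 : ∀ x y z : g, ρ1 (br (br x y) z) =
        ρ1 x * ρ1 y * ρ1 z - ρ1 z * ρ1 x * ρ1 y + ρ1 y * ρ1 (br z x) - ρ1 (br y z) * ρ1 x)
    (ρ2 : g →ₗ[k] Module.End k W)
    (hρ2 : ∀ x y z : g, ρ2 (br (br x y) z) =
        ρ2 x * ρ2 y * ρ2 z - ρ2 z * ρ2 x * ρ2 y + ρ2 y * ρ2 (br z x) - ρ2 (br y z) * ρ2 x)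
    (T' : V →ₗ[k] W)
    (hT' : ∀ (x : g) (v : V), T' (ρ1 x v) = ρ2 x (T' v))
    (ρ3 : M →ₗ[k] W →ₗ[k] V)
    (hρ3 : ∀ (m : M) (v : V), ρ2 (T m) (T' v) = T' (ρ3 m (T' v)))
    (hc1 : ∀ (x y : g) (w : W) (m : M),
        ρ3 m (ρ2 x (ρ2 y w)) - ρ1 x (ρ1 y (ρ3 m w)) + ρ1 y (ρ3 (ρ x m) w) +
        ρ3 (ρ y m) (ρ2 x w) + ρ3 (ρ (br x y) m) w = 0)
    (hc2 : ∀ (x y : g) (w : W) (m : M),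
        ρ3 m (ρ2 (br x y) w) - ρ1 x (ρ1 y (ρ3 m w)) + ρ3 (ρ x (ρ y m)) w +
        ρ1 y (ρ3 m (ρ2 x w)) + ρ3 (ρ x m) (ρ2 y w) = 0)
    (hc3 : ∀ (x y : g) (w : W) (m : M),
        ρ3 m (ρ2 x (ρ2 y w)) - ρ3 (ρ y (ρ x m)) w + ρ1 x (ρ3 (ρ y m) w) -
        ρ1 y (ρ3 m (ρ2 x w)) + ρ1 (br y x) (ρ3 m w) = 0)
    -- the cochain data
    (θ : M →ₗ[k] W)
    (ω : g →ₗ[k] g →ₗ[k] W)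
    (hω : ∀ x y : g, ω x y = - ω y x)
    (ν : g →ₗ[k] M →ₗ[k] V)
    -- the twisted structure maps
    (Br : g × W → g × W → g × W)
    (hBr : ∀ a b : g × W, Br a b = (br a.1 b.1, ω a.1 b.1 + ρ2 a.1 b.2 - ρ2 b.1 a.2))
    (P : g × W → M × V → M × V)
    (hP : ∀ (a : g × W) (u : M × V),
        P a u = (ρ a.1 u.1, ν a.1 u.1 + ρ1 a.1 u.2 - ρ3 u.1 a.2))
    (That : M × V → g × W)
    (hThat : ∀ u : M × V, That u = (T u.1, θ u.1 + T' u.2)) :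
    (∀ u v : M × V, Br (That u) (That v) = That (P (That u) v)) ↔
    (∀ m n : M,
        ρ2 (T m) (θ n) - ρ2 (T n) (θ m) + ω (T m) (T n)
        - T' (ν (T m) n) - θ (ρ (T m) n) + T' (ρ3 n (θ m)) = 0) := by
  constructor
  · intro h m n
    have := h (m, 0) (n, 0)
    rw [hThat, hThat, hBr, hThat, hP] at this
    simp only [Prod.mk.injEq, map_zero, add_zero] at this
    have h2 := this.2
    simp only [map_sub] at h2
    linear_combination (norm := abel) h2
  · intro h u v
    obtain ⟨m, a⟩ := u; obtain ⟨n, b⟩ := v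
    rw [hThat, hThat, hBr, hThat, hP]
    have hc := h m n
    refine Prod.ext (hT m n) ?_
    simp only [map_add]
    have e1 : ρ2 (T m) (T' b) = T' (ρ1 (T m) b) := (hT' (T m) b).symm
    have e2 : ρ2 (T n) (T' a) = T' (ρ3 n (T' a)) := hρ3 n a
    rw [map_sub, map_add, e1, e2]
    simp only [map_add, map_sub]
    linear_combination (norm := abel) hc
end

section
/- Let g be a Malcev algebra over k, let ρ2 be a representation of g on a k-vector space W, and let ω : g × g → W be a skew-symmetric bilinear map. Define on g ⊕ W the skew-symmetric bracket [(x,w1),(y,w2)]_ω := ([x,y], ω(x,y) + ρ2(x)(w2) − ρ2(y)(w1)). Then this bracket satisfies the Sagle identity (so that g ⊕ W is a Malcev algebra) if and only if for all x,y,z,t ∈ g: ρ2([x,z])(ω(y,t)) − ρ2([y,t])(ω(x,z)) + ω([x,z],[y,t]) − ρ2(t)ρ2(z)(ω(x,y)) + ρ2(t)(ω([x,y],z)) − ω([[x,y],z],t) − ρ2(x)ρ2(t)(ω(y,z)) + ρ2(x)(ω([y,z],t)) − ω([[y,z],t],x) − ρ2(y)ρ2(x)(ω(z,t)) + ρ2(y)(ω([z,t],x))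 − ω([[z,t],x],y) − ρ2(z)ρ2(y)(ω(t,x)) + ρ2(z)(ω([t,x],y)) − ω([[t,x],y],z) = 0. -/
/-- The twisted bracket `[(x,w1),(y,w2)]_ω = ([x,y], ω(x,y) + ρ2(x)(w2) − ρ2(y)(w1))`
on `g ⊕ W` satisfies the Sagle identity if and only if `ω` satisfies the 2-cocycle
condition for the Malcev algebra `g` with coefficients in `(W, ρ2)`. -/
theorem twisted_bracket_sagle_iff_cocycle {k g W : Type*} [Field k] [CharZero k]
    [AddCommGroup g] [Module k g] [AddCommGroup W] [Module k W]
    -- g is a Malcev algebra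
    (br : g →ₗ[k] g →ₗ[k] g)
    (skew : ∀ x y : g, br x y = - br y x)
    (sagle : ∀ x y z t : g, br (br x z) (br y t) =
        br (br (br x y) z) t + br (br (br y z) t) x +
        br (br (br z t) x) y + br (br (br t x) y) z)
    -- ρ2 is a representation of g on W
    (ρ2 : g →ₗ[k] Module.End k W)
    (hρ2 : ∀ x y z : g, ρ2 (br (br x y) z) =
        ρ2 x * ρ2 y * ρ2 z - ρ2 z * ρ2 x * ρ2 y + ρ2 y * ρ2 (br z x) - ρ2 (br y z) * ρ2 x)
    -- ω is a skew-symmetric bilinear map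
    (ω : g →ₗ[k] g →ₗ[k] W)
    (hω : ∀ x y : g, ω x y = - ω y x)
    -- the twisted bracket on g ⊕ W
    (Br : g × W → g × W → g × W)
    (hBr : ∀ a b : g × W, Br a b = (br a.1 b.1, ω a.1 b.1 + ρ2 a.1 b.2 - ρ2 b.1 a.2)) :
    (∀ a b c d : g × W, Br (Br a c) (Br b d) =
        Br (Br (Br a b) c) d + Br (Br (Br b c) d) a +
        Br (Br (Br c d) a) b + Br (Br (Br d a) b) c) ↔
    (∀ x y z t : g,
        ρ2 (br x z) (ω y t) - ρ2 (br y t) (ω x z) + ω (br x z) (br y t)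
        - ρ2 t (ρ2 z (ω x y)) + ρ2 t (ω (br x y) z) - ω (br (br x y) z) t
        - ρ2 x (ρ2 t (ω y z)) + ρ2 x (ω (br y z) t) - ω (br (br y z) t) x
        - ρ2 y (ρ2 x (ω z t)) + ρ2 y (ω (br z t) x) - ω (br (br z t) x) y
        - ρ2 z (ρ2 y (ω t x)) + ρ2 z (ω (br t x) y) - ω (br (br t x) y) z = 0) := by
  have hC : ∀ a b c : g, ρ2 (br a c) * ρ2 b = ρ2 (br (br a b) c) - ρ2 c * ρ2 b * ρ2 a
      + ρ2 b * ρ2 a * ρ2 c - ρ2 a * ρ2 (br b c) := by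
    intro a b c
    have h := hρ2 b a c
    simp only [skew b a, skew c b, map_neg, LinearMap.neg_apply] at h
    linear_combination (norm := noncomm_ring) h
  have hC' : ∀ a b c : g, ρ2 (br a c) * ρ2 b = ρ2 c * ρ2 (br b a) - ρ2 b * ρ2 c * ρ2 a
      + ρ2 a * ρ2 b * ρ2 c - ρ2 (br (br c b) a) := by
    intro a b c
    have h := hρ2 b c a
    simp only [skew b c, skew a c, map_neg, LinearMap.neg_apply] at h
    simp only [skew b a, skew c a, map_neg, LinearMap.neg_apply] at h ⊢
    linear_combination (norm := noncomm_ring) -h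
  constructor
  · intro H x y z t
    have h := congrArg Prod.snd (H (x,0) (y,0) (z,0) (t,0))
    simp only [hBr, Prod.snd_add, map_sub, map_add, map_zero, add_zero, sub_zero, zero_sub, zero_add, map_neg] at h
    have h' := sub_eq_zero_of_eq h
    rw [← h']
    abel
  · rintro H ⟨x,w1⟩ ⟨y,w2⟩ ⟨z,w3⟩ ⟨t,w4⟩
    have hw1 := DFunLike.congr_fun (hC y z t) w1
    have hw2 := DFunLike.congr_fun (hC' x t z) w2
    have hw3 := DFunLike.congr_fun (hC' y x t) w3
    have hw4 := DFunLike.congr_fun (hC x y z) w4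
    simp only [Module.End.mul_apply, LinearMap.sub_apply, LinearMap.add_apply, LinearMap.neg_apply] at hw1 hw2 hw3 hw4
    have hc := H x y z t
    refine Prod.ext ?_ ?_ <;>
      simp only [hBr, Prod.fst_add, Prod.snd_add, map_add, map_sub]
    · exact (sagle x y z t).trans (by abel)
    · rw [hw1, hw2, hw3, hw4, ← sub_eq_zero, ← hc]
      abel
end

section
/- Let g be a Malcev algebra over k with representations ρ on M, ρ1 on V, ρ2 on W, and let ρ3 : M → Hom(W,V) be a linear map satisfying the three compatibility conditions of a representation of an embedding tensor. Let ω : g × g → W be skew-symmetric bilinear and ν : g × M → V bilinear, and equip g ⊕ W with the bracket [(x,w1),(y,w2)]_ω := ([x,y], ω(x,y) + ρ2(x)(w2) − ρ2(y)(w1)) and define ρ̂_ν : g ⊕ W → End(M ⊕ V) by ρ̂_ν(x,w)(m,v) := (ρ(x)(m), ν(x,m) + ρ1(x)(v) − ρ3(m)(w)). If ρ̂_ν is a representation of (g ⊕ W, [·,·]_ω) on M ⊕ V, then for all x,y,z ∈ g and m ∈ M: ρ3(m)(ρ2(z)(ω(x,y))) − ρ3(m)(ω([x,y],z)) + ν([[x,y],z],m)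 − ρ1(x)ρ1(y)(ν(z,m)) − ρ1(x)(ν(y,ρ(z)(m))) − ν(x,ρ(y)ρ(z)(m)) + ρ1(z)ρ1(x)(ν(y,m)) + ρ1(z)(ν(x,ρ(y)(m))) + ν(z,ρ(x)ρ(y)(m)) + ρ1(y)(ρ3(m)(ω(z,x))) − ρ1(y)(ν([z,x],m)) − ν(y,ρ([z,x])(m)) − ρ3(ρ(x)(m))(ω(y,z)) + ρ1([y,z])(ν(x,m)) + ν([y,z],ρ(x)(m)) = 0. -/
/-- If the twisted action `ρ̂_ν` is a representation of `(g ⊕ W, [·,·]_ω)` on `M ⊕ V`,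
then the pair `(ω, ν)` satisfies the 2-cocycle condition. -/
theorem twisted_action_representation_implies_cocycle {k g M V W : Type*} [Field k] [CharZero k]
    [AddCommGroup g] [Module k g] [AddCommGroup M] [Module k M]
    [AddCommGroup V] [Module k V] [AddCommGroup W] [Module k W]
    -- g is a Malcev algebra
    (br : g →ₗ[k] g →ₗ[k] g)
    (skew : ∀ x y : g, br x y = - br y x)
    (sagle : ∀ x y z t : g, br (br x z) (br y t) =
        br (br (br x y) z) t + br (br (br y z) t) x +
        br (br (br z t) x) y + br (br (br t x) y) z)
    -- ρ, ρ1, ρ2 are representations of g on M, V, W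
    (ρ : g →ₗ[k] Module.End k M)
    (hρ : ∀ x y z : g, ρ (br (br x y) z) =
        ρ x * ρ y * ρ z - ρ z * ρ x * ρ y + ρ y * ρ (br z x) - ρ (br y z) * ρ x)
    (ρ1 : g →ₗ[k] Module.End k V)
    (hρ1 : ∀ x y z : g, ρ1 (br (br x y) z) =
        ρ1 x * ρ1 y * ρ1 z - ρ1 z * ρ1 x * ρ1 y + ρ1 y * ρ1 (br z x) - ρ1 (br y z) * ρ1 x)
    (ρ2 : g →ₗ[k] Module.End k W)
    (hρ2 : ∀ x y z : g, ρ2 (br (br x y) z) =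
        ρ2 x * ρ2 y * ρ2 z - ρ2 z * ρ2 x * ρ2 y + ρ2 y * ρ2 (br z x) - ρ2 (br y z) * ρ2 x)
    -- ρ3 satisfies the three compatibility conditions
    (ρ3 : M →ₗ[k] W →ₗ[k] V)
    (hc1 : ∀ (x y : g) (w : W) (m : M),
        ρ3 m (ρ2 x (ρ2 y w)) - ρ1 x (ρ1 y (ρ3 m w)) + ρ1 y (ρ3 (ρ x m) w) +
        ρ3 (ρ y m) (ρ2 x w) + ρ3 (ρ (br x y) m) w = 0)
    (hc2 : ∀ (x y : g) (w : W) (m : M),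
        ρ3 m (ρ2 (br x y) w) - ρ1 x (ρ1 y (ρ3 m w)) + ρ3 (ρ x (ρ y m)) w +
        ρ1 y (ρ3 m (ρ2 x w)) + ρ3 (ρ x m) (ρ2 y w) = 0)
    (hc3 : ∀ (x y : g) (w : W) (m : M),
        ρ3 m (ρ2 x (ρ2 y w)) - ρ3 (ρ y (ρ x m)) w + ρ1 x (ρ3 (ρ y m) w) -
        ρ1 y (ρ3 m (ρ2 x w)) + ρ1 (br y x) (ρ3 m w) = 0)
    -- the cochain data
    (ω : g →ₗ[k] g →ₗ[k] W)
    (hω : ∀ x y : g, ω x y = - ω y x)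
    (ν : g →ₗ[k] M →ₗ[k] V)
    -- the twisted structure maps
    (Br : g × W → g × W → g × W)
    (hBr : ∀ a b : g × W, Br a b = (br a.1 b.1, ω a.1 b.1 + ρ2 a.1 b.2 - ρ2 b.1 a.2))
    (P : g × W → M × V → M × V)
    (hP : ∀ (a : g × W) (u : M × V),
        P a u = (ρ a.1 u.1, ν a.1 u.1 + ρ1 a.1 u.2 - ρ3 u.1 a.2))
    -- ρ̂_ν is a representation of (g ⊕ W, [·,·]_ω) on M ⊕ V
    (hrep : ∀ (a b c : g × W) (u : M × V), P (Br (Br a b) c) u =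
        P a (P b (P c u)) - P c (P a (P b u)) + P b (P (Br c a) u) - P (Br b c) (P a u)) :
    ∀ (x y z : g) (m : M),
        ρ3 m (ρ2 z (ω x y)) - ρ3 m (ω (br x y) z) + ν (br (br x y) z) m
        - ρ1 x (ρ1 y (ν z m)) - ρ1 x (ν y (ρ z m)) - ν x (ρ y (ρ z m))
        + ρ1 z (ρ1 x (ν y m)) + ρ1 z (ν x (ρ y m)) + ν z (ρ x (ρ y m))
        + ρ1 y (ρ3 m (ω z x)) - ρ1 y (ν (br z x) m) - ν y (ρ (br z x) m)
        - ρ3 (ρ x m) (ω y z) + ρ1 (br y z) (ν x m) + ν (br y z) (ρ x m) = 0 := by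
  intro x y z m
  have h := hrep (x, 0) (y, 0) (z, 0) (m, 0)
  simp only [hBr, hP, Prod.mk.injEq, map_zero, add_zero, sub_zero, zero_sub,
    Prod.fst, Prod.snd, Prod.mk_sub_mk, Prod.mk_add_mk] at h
  have h2 := h.2
  simp only [map_add, map_sub, map_neg, map_zero, add_zero, sub_zero, zero_sub] at h2 ⊢
  have h3 := sub_eq_zero_of_eq h2
  rw [← h3]
  abel
end

section
/- Let (M, g, T) be an embedding tensor on a Malcev algebra g with representation ρ on M, let (V, W, T', ρ1, ρ2, ρ3) be a representation of (M, g, T), and let (θ, ω, ν) and (θ', ω', ν') be two triples of linear maps θ, θ' : M → W, skew-symmetric bilinear ω, ω' : g × g → W, bilinear ν, ν' : g × M → V. For a triple (θ, ω, ν) define the extension structure on (M ⊕ V, g ⊕ W): T̂_θ(m,v) := (T(m), θ(m) + T'(v)), [(x,w1),(y,w2)]_ω := ([x,y], ω(x,y) + ρ2(x)(w2) − ρ2(y)(w1)), ρ̂_ν(x,w)(m,v) := (ρ(x)(m), ν(x,m) + ρ1(x)(v) − ρ3(m)(w)), and similarly for (θ', ω', ν'). Given linear maps b0 : M → V and b1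 : g → W, define F0(m,v) := (m, b0(m) + v) and F1(x,w) := (x, b1(x) + w). Then the pair (F0, F1) is a morphism from the (θ, ω, ν)-structure to the (θ', ω', ν')-structure — i.e., T̂'_{θ'} ∘ F0 = F1 ∘ T̂_θ, F1([a,b]_ω) = [F1(a), F1(b)]_{ω'} for all a,b ∈ g ⊕ W, and F0(ρ̂_ν(a)(u)) = ρ̂'_{ν'}(F1(a))(F0(u)) for all a ∈ g ⊕ W, u ∈ M ⊕ V — if and only if for all m ∈ M and x,y ∈ g: θ(m) − θ'(m) = T'(b0(m)) − b1(T(m)), ω(x,y) − ω'(x,y) = ρ2(x)(b1(y)) − ρ2(y)(b1(x)) − b1([x,y]), and ν(x,m) − ν'(x,m) = ρ1(x)(b0(m)) − ρ3(m)(b1(x)) − b0(ρ(x)(m)). -/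
/-- The pair `(F0, F1)` built from `(b0, b1)` is a morphism between the extension structures
determined by `(θ, ω, ν)` and `(θ', ω', ν')` if and only if the difference of the two
2-cocycles is the coboundary of `(b0, b1)`. -/
theorem morphism_iff_coboundary {k g M V W : Type*} [Field k] [CharZero k]
    [AddCommGroup g] [Module k g] [AddCommGroup M] [Module k M]
    [AddCommGroup V] [Module k V] [AddCommGroup W] [Module k W]
    -- g is a Malcev algebra
    (br : g →ₗ[k] g →ₗ[k] g)
    (skew : ∀ x y : g, br x y = - br y x)
    (sagle : ∀ x y z t : g, br (br x z) (br y t) =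
        br (br (br x y) z) t + br (br (br y z) t) x +
        br (br (br z t) x) y + br (br (br t x) y) z)
    -- ρ is a representation of g on M, T an embedding tensor
    (ρ : g →ₗ[k] Module.End k M)
    (hρ : ∀ x y z : g, ρ (br (br x y) z) =
        ρ x * ρ y * ρ z - ρ z * ρ x * ρ y + ρ y * ρ (br z x) - ρ (br y z) * ρ x)
    (T : M →ₗ[k] g)
    (hT : ∀ m n : M, br (T m) (T n) = T (ρ (T m) n))
    -- (V, W, T', ρ1, ρ2, ρ3) is a representation of (M, g, T)
    (ρ1 : g →ₗ[k] Module.End k V)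
    (hρ1 : ∀ x y z : g, ρ1 (br (br x y) z) =
        ρ1 x * ρ1 y * ρ1 z - ρ1 z * ρ1 x * ρ1 y + ρ1 y * ρ1 (br z x) - ρ1 (br y z) * ρ1 x)
    (ρ2 : g →ₗ[k] Module.End k W)
    (hρ2 : ∀ x y z : g, ρ2 (br (br x y) z) =
        ρ2 x * ρ2 y * ρ2 z - ρ2 z * ρ2 x * ρ2 y + ρ2 y * ρ2 (br z x) - ρ2 (br y z) * ρ2 x)
    (T' : V →ₗ[k] W)
    (hT' : ∀ (x : g) (v : V), T' (ρ1 x v) = ρ2 x (T' v))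
    (ρ3 : M →ₗ[k] W →ₗ[k] V)
    (hρ3 : ∀ (m : M) (v : V), ρ2 (T m) (T' v) = T' (ρ3 m (T' v)))
    (hc1 : ∀ (x y : g) (w : W) (m : M),
        ρ3 m (ρ2 x (ρ2 y w)) - ρ1 x (ρ1 y (ρ3 m w)) + ρ1 y (ρ3 (ρ x m) w) +
        ρ3 (ρ y m) (ρ2 x w) + ρ3 (ρ (br x y) m) w = 0)
    (hc2 : ∀ (x y : g) (w : W) (m : M),
        ρ3 m (ρ2 (br x y) w) - ρ1 x (ρ1 y (ρ3 m w)) + ρ3 (ρ x (ρ y m)) w +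
        ρ1 y (ρ3 m (ρ2 x w)) + ρ3 (ρ x m) (ρ2 y w) = 0)
    (hc3 : ∀ (x y : g) (w : W) (m : M),
        ρ3 m (ρ2 x (ρ2 y w)) - ρ3 (ρ y (ρ x m)) w + ρ1 x (ρ3 (ρ y m) w) -
        ρ1 y (ρ3 m (ρ2 x w)) + ρ1 (br y x) (ρ3 m w) = 0)
    -- two triples of cochain data
    (θ θ' : M →ₗ[k] W)
    (ω ω' : g →ₗ[k] g →ₗ[k] W)
    (hω : ∀ x y : g, ω x y = - ω y x) (hω' : ∀ x y : g, ω' x y = - ω' y x)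
    (ν ν' : g →ₗ[k] M →ₗ[k] V)
    -- the two extension structures
    (Br Br' : g × W → g × W → g × W)
    (hBr : ∀ a b : g × W, Br a b = (br a.1 b.1, ω a.1 b.1 + ρ2 a.1 b.2 - ρ2 b.1 a.2))
    (hBr' : ∀ a b : g × W, Br' a b = (br a.1 b.1, ω' a.1 b.1 + ρ2 a.1 b.2 - ρ2 b.1 a.2))
    (P P' : g × W → M × V → M × V)
    (hP : ∀ (a : g × W) (u : M × V),
        P a u = (ρ a.1 u.1, ν a.1 u.1 + ρ1 a.1 u.2 - ρ3 u.1 a.2))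
    (hP' : ∀ (a : g × W) (u : M × V),
        P' a u = (ρ a.1 u.1, ν' a.1 u.1 + ρ1 a.1 u.2 - ρ3 u.1 a.2))
    (That That' : M × V → g × W)
    (hThat : ∀ u : M × V, That u = (T u.1, θ u.1 + T' u.2))
    (hThat' : ∀ u : M × V, That' u = (T u.1, θ' u.1 + T' u.2))
    -- the candidate morphism
    (b0 : M →ₗ[k] V) (b1 : g →ₗ[k] W)
    (F0 : M × V → M × V) (F1 : g × W → g × W)
    (hF0 : ∀ u : M × V, F0 u = (u.1, b0 u.1 + u.2))
    (hF1 : ∀ a : g × W, F1 a = (a.1, b1 a.1 + a.2)) :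
    ((∀ u : M × V, That' (F0 u) = F1 (That u)) ∧
     (∀ a b : g × W, F1 (Br a b) = Br' (F1 a) (F1 b)) ∧
     (∀ (a : g × W) (u : M × V), F0 (P a u) = P' (F1 a) (F0 u))) ↔
    ((∀ m : M, θ m - θ' m = T' (b0 m) - b1 (T m)) ∧
     (∀ x y : g, ω x y - ω' x y = ρ2 x (b1 y) - ρ2 y (b1 x) - b1 (br x y)) ∧
     (∀ (x : g) (m : M), ν x m - ν' x m = ρ1 x (b0 m) - ρ3 m (b1 x) - b0 (ρ x m))) := by
  constructor
  · rintro ⟨h1, h2, h3⟩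
    refine ⟨fun m => ?_, fun x y => ?_, fun x m => ?_⟩
    · have h := h1 (m, 0)
      simp [hThat, hThat', hF0, hF1, Prod.ext_iff] at h
      linear_combination (norm := module) -h
    · have h := h2 (x, 0) (y, 0)
      simp [hBr, hBr', hF1, Prod.ext_iff] at h
      linear_combination (norm := module) h
    · have h := h3 (x, 0) (m, 0)
      simp [hP, hP', hF0, hF1, Prod.ext_iff] at h
      linear_combination (norm := module) h
  · rintro ⟨h1, h2, h3⟩
    refine ⟨fun u => ?_, fun a b => ?_, fun a u => ?_⟩
    · simp only [hThat, hThat', hF0, hF1, Prod.ext_iff, map_add]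
      refine ⟨by simp, ?_⟩
      linear_combination (norm := module) -h1 u.1
    · simp only [hBr, hBr', hF1, Prod.ext_iff, map_add]
      refine ⟨by simp, ?_⟩
      linear_combination (norm := module) h2 a.1 b.1
    · simp only [hP, hP', hF0, hF1, Prod.ext_iff, map_add]
      refine ⟨by simp, ?_⟩
      linear_combination (norm := module) h3 a.1 u.1
end

section
/- Let g be a Malcev algebra over k, ρ a representation of g on M, ω : g × g → g a skew-symmetric bilinear map such that [x,y]_λ := [x,y] + λ ω(x,y) satisfies the Sagle identity for all λ ∈ k, and ν : g × M → M a bilinear map. For λ ∈ k set ρ_λ(x)(m) := ρ(x)(m) + λ ν(x,m) and let R_λ(x,y,z)(m) := ρ_λ([[x,y]_λ,z]_λ)(m) − ρ_λ(x)ρ_λ(y)ρ_λ(z)(m) + ρ_λ(z)ρ_λ(x)ρ_λ(y)(m) − ρ_λ(y)ρ_λ([z,x]_λ)(m) + ρ_λ([y,z]_λ)ρ_λ(x)(m), which for fixed x,y,z,m is a polynomial in λ of degree at most 3, R_λ = R_0 + λ R_1 + λ² R_2 + λ³ R_3, where R_r(x,y,z)(m) is the sum of all terms obtained from the representation expression ρ([[x,y],z])(m)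 − ρ(x)ρ(y)ρ(z)(m) + ρ(z)ρ(x)ρ(y)(m) − ρ(y)ρ([z,x])(m) + ρ([y,z])ρ(x)(m) by replacing exactly r of the three occurrences of ρ or [·,·] in each summand by ν or ω respectively. Then ρ_λ is a representation of (g,[·,·]_λ) on M for every λ ∈ k if and only if R_1(x,y,z)(m) = R_2(x,y,z)(m) = R_3(x,y,z)(m) = 0 for all x,y,z ∈ g and m ∈ M. -/
/-- The deformed action `ρ_λ = ρ + λν` is a representation of the deformed Malcev algebra
`(g, [·,·] + λω)` for every `λ` if and only if the homogeneous components `R₁, R₂, R₃`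
of the representation expression all vanish. -/
theorem deformed_representation_iff {k g M : Type*} [Field k] [CharZero k]
    [AddCommGroup g] [Module k g] [AddCommGroup M] [Module k M]
    -- g is a Malcev algebra
    (br : g →ₗ[k] g →ₗ[k] g)
    (skew : ∀ x y : g, br x y = - br y x)
    (sagle : ∀ x y z t : g, br (br x z) (br y t) =
        br (br (br x y) z) t + br (br (br y z) t) x +
        br (br (br z t) x) y + br (br (br t x) y) z)
    -- ω is a skew-symmetric bilinear map
    (ω : g →ₗ[k] g →ₗ[k] g)
    (hω : ∀ x y : g, ω x y = - ω y x)
    -- the deformed bracket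
    (Bl : k → g → g → g)
    (hBl : ∀ (l : k) (x y : g), Bl l x y = br x y + l • ω x y)
    -- the deformed bracket satisfies the Sagle identity for all λ
    (hBlSagle : ∀ (l : k) (x y z t : g), Bl l (Bl l x z) (Bl l y t) =
        Bl l (Bl l (Bl l x y) z) t + Bl l (Bl l (Bl l y z) t) x +
        Bl l (Bl l (Bl l z t) x) y + Bl l (Bl l (Bl l t x) y) z)
    -- ρ is a representation of g on M
    (ρ : g →ₗ[k] Module.End k M)
    (hρ : ∀ x y z : g, ρ (br (br x y) z) =
        ρ x * ρ y * ρ z - ρ z * ρ x * ρ y + ρ y * ρ (br z x) - ρ (br y z) * ρ x)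
    -- ν is a bilinear map
    (ν : g →ₗ[k] M →ₗ[k] M)
    -- the deformed action
    (Pl : k → g → M → M)
    (hPl : ∀ (l : k) (x : g) (m : M), Pl l x m = ρ x m + l • ν x m)
    -- the homogeneous components of the representation expression
    (R1 R2 R3 : g → g → g → M → M)
    (hR1 : ∀ (x y z : g) (m : M), R1 x y z m =
        (ν (br (br x y) z) m + ρ (ω (br x y) z) m + ρ (br (ω x y) z) m)
        - (ν x (ρ y (ρ z m)) + ρ x (ν y (ρ z m)) + ρ x (ρ y (ν z m)))
        + (ν z (ρ x (ρ y m)) + ρ z (ν x (ρ y m)) + ρ z (ρ x (ν y m)))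
        - (ν y (ρ (br z x) m) + ρ y (ν (br z x) m) + ρ y (ρ (ω z x) m))
        + (ν (br y z) (ρ x m) + ρ (ω y z) (ρ x m) + ρ (br y z) (ν x m)))
    (hR2 : ∀ (x y z : g) (m : M), R2 x y z m =
        (ν (ω (br x y) z) m + ν (br (ω x y) z) m + ρ (ω (ω x y) z) m)
        - (ρ x (ν y (ν z m)) + ν x (ρ y (ν z m)) + ν x (ν y (ρ z m)))
        + (ρ z (ν x (ν y m)) + ν z (ρ x (ν y m)) + ν z (ν x (ρ y m)))
        - (ν y (ν (br z x) m) + ν y (ρ (ω z x) m) + ρ y (ν (ω z x) m))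
        + (ν (ω y z) (ρ x m) + ν (br y z) (ν x m) + ρ (ω y z) (ν x m)))
    (hR3 : ∀ (x y z : g) (m : M), R3 x y z m =
        ν (ω (ω x y) z) m - ν x (ν y (ν z m)) + ν z (ν x (ν y m))
        - ν y (ν (ω z x) m) + ν (ω y z) (ν x m)) :
    (∀ (l : k) (x y z : g) (m : M), Pl l (Bl l (Bl l x y) z) m =
        Pl l x (Pl l y (Pl l z m)) - Pl l z (Pl l x (Pl l y m))
        + Pl l y (Pl l (Bl l z x) m) - Pl l (Bl l y z) (Pl l x m)) ↔
    (∀ (x y z : g) (m : M), R1 x y z m = 0 ∧ R2 x y z m = 0 ∧ R3 x y z m = 0) := by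
  have key : ∀ (l : k) (x y z : g) (m : M),
      Pl l (Bl l (Bl l x y) z) m -
        (Pl l x (Pl l y (Pl l z m)) - Pl l z (Pl l x (Pl l y m))
          + Pl l y (Pl l (Bl l z x) m) - Pl l (Bl l y z) (Pl l x m)) =
      l • R1 x y z m + (l*l) • R2 x y z m + (l*l*l) • R3 x y z m := by
    intro l x y z m
    have h0 := DFunLike.congr_fun (hρ x y z) m
    simp only [LinearMap.sub_apply, LinearMap.add_apply, Module.End.mul_apply] at h0
    simp only [hPl, hBl, hR1, hR2, hR3, map_add, map_smul, LinearMap.add_apply,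
      LinearMap.smul_apply, smul_add, smul_sub, smul_smul]
    rw [h0]
    module
  constructor
  · intro h x y z m
    have e : ∀ l : k, l • R1 x y z m + (l*l) • R2 x y z m + (l*l*l) • R3 x y z m = 0 := by
      intro l
      rw [← key l x y z m, sub_eq_zero]
      exact h l x y z m
    set a := R1 x y z m with ha
    set b := R2 x y z m with hb
    set c := R3 x y z m with hc
    have hc0 : c = 0 := by
      have h6 : (6:k) • c = 0 := by
        calc (6:k) • c
            = (3:k) • ((1:k) • a + ((1:k)*(1:k)) • b + ((1:k)*(1:k)*(1:k)) • c)
              + (-3:k) • ((2:k) • a + ((2:k)*(2:k)) • b + ((2:k)*(2:k)*(2:k)) • c)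
              + ((3:k) • a + ((3:k)*(3:k)) • b + ((3:k)*(3:k)*(3:k)) • c) := by module
          _ = 0 := by rw [e 1, e 2, e 3]; simp
      have h6' : (6:k) ≠ 0 := by norm_num
      simpa [smul_eq_zero, h6'] using h6
    have hb0 : b = 0 := by
      have h2 : (2:k) • b = 0 := by
        calc (2:k) • b
            = (-2:k) • ((1:k) • a + ((1:k)*(1:k)) • b + ((1:k)*(1:k)*(1:k)) • c)
              + ((2:k) • a + ((2:k)*(2:k)) • b + ((2:k)*(2:k)*(2:k)) • c)
              + (-6:k) • c := by module
          _ = 0 := by rw [e 1, e 2, hc0]; simp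
      have h2' : (2:k) ≠ 0 := two_ne_zero
      simpa [smul_eq_zero, h2'] using h2
    have ha0 : a = 0 := by
      calc a = ((1:k) • a + ((1:k)*(1:k)) • b + ((1:k)*(1:k)*(1:k)) • c)
              + (-1:k) • b + (-1:k) • c := by module
        _ = 0 := by rw [e 1, hb0, hc0]; simp
    exact ⟨ha0, hb0, hc0⟩
  · intro h l x y z m
    obtain ⟨h1, h2, h3⟩ := h x y z m
    have hk := key l x y z m
    rw [h1, h2, h3] at hk
    simp only [smul_zero, add_zero] at hk
    exact sub_eq_zero.mp hk
end

section
/- Let (M, g, T) be an embedding tensor on a Malcev algebra g with representation ρ on M, and let θ : M → g be linear, ω : g × g → g skew-symmetric bilinear, and ν : g × M → M bilinear. For λ ∈ k set T_λ(m) := T(m) + λ θ(m), [x,y]_λ := [x,y] + λ ω(x,y), and ρ_λ(x)(m) := ρ(x)(m) + λ ν(x,m). Then T_λ satisfies the embedding tensor identity [T_λ(m), T_λ(n)]_λ = T_λ(ρ_λ(T_λ(m))(n)) for every λ ∈ k and all m,n ∈ M if and only if the following three identities hold for all m,n ∈ M: (1) [T(m),θ(n)] + [θ(m),T(n)] + ω(T(m),T(n))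 − T(ρ(θ(m))(n)) − T(ν(T(m),n)) − θ(ρ(T(m))(n)) = 0; (2) [θ(m),θ(n)] + ω(T(m),θ(n)) + ω(θ(m),T(n)) − T(ν(θ(m),n)) − θ(ρ(θ(m))(n)) − θ(ν(T(m),n)) = 0; (3) ω(θ(m),θ(n)) − θ(ν(θ(m),n)) = 0. -/
lemma aux_cubic {k V : Type*} [Field k] [CharZero k] [AddCommGroup V] [Module k V]
    (a b c : V) (h : ∀ l : k, l • a + (l*l) • b + (l*l*l) • c = 0) :
    a = 0 ∧ b = 0 ∧ c = 0 := by
  have h1 := h 1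
  have h2 := h (-1)
  have h3 := h 2
  have hb : (2:k) • b = 0 := by
    have e : (2:k) • b = ((1:k) • a + ((1:k)*1) • b + ((1:k)*1*1) • c)
        + ((-1:k) • a + ((-1:k)*(-1)) • b + ((-1:k)*(-1)*(-1)) • c) := by module
    rw [e, h1, h2, add_zero]
  have hb0 : b = 0 := by
    rcases smul_eq_zero.mp hb with h' | h'
    · exact absurd h' two_ne_zero
    · exact h'
  subst hb0
  simp only [smul_zero, add_zero, zero_add] at h1 h3
  have hc : (6:k) • c = 0 := by
    have e : (6:k) • c = ((2:k) • a + ((2:k)*2*2) • c)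
        - (2:k) • ((1:k) • a + ((1:k)*1*1) • c) := by module
    rw [e, h3, h1, smul_zero, sub_zero]
  have hc0 : c = 0 := by
    rcases smul_eq_zero.mp hc with h' | h'
    · norm_num at h'
    · exact h'
  have ha0 : a = 0 := by simpa [hc0] using h1
  exact ⟨ha0, rfl, hc0⟩


/-- The deformed map `T_λ = T + λθ` satisfies the embedding tensor identity with respect to
the deformed bracket `[·,·]_λ = [·,·] + λω` and deformed action `ρ_λ = ρ + λν` for every
`λ` if and only if the three identities (1), (2), (3) hold. -/
theorem deformed_embedding_tensor_iff {k g M : Type*} [Field k] [CharZero k]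
    [AddCommGroup g] [Module k g] [AddCommGroup M] [Module k M]
    -- g is a Malcev algebra
    (br : g →ₗ[k] g →ₗ[k] g)
    (skew : ∀ x y : g, br x y = - br y x)
    (sagle : ∀ x y z t : g, br (br x z) (br y t) =
        br (br (br x y) z) t + br (br (br y z) t) x +
        br (br (br z t) x) y + br (br (br t x) y) z)
    -- ρ is a representation of g on M
    (ρ : g →ₗ[k] Module.End k M)
    (hρ : ∀ x y z : g, ρ (br (br x y) z) =
        ρ x * ρ y * ρ z - ρ z * ρ x * ρ y + ρ y * ρ (br z x) - ρ (br y z) * ρ x)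
    -- T is an embedding tensor
    (T : M →ₗ[k] g)
    (hT : ∀ m n : M, br (T m) (T n) = T (ρ (T m) n))
    -- the deformation data
    (θ : M →ₗ[k] g)
    (ω : g →ₗ[k] g →ₗ[k] g)
    (hω : ∀ x y : g, ω x y = - ω y x)
    (ν : g →ₗ[k] M →ₗ[k] M)
    -- the deformed structure maps
    (Bl : k → g → g → g)
    (hBl : ∀ (l : k) (x y : g), Bl l x y = br x y + l • ω x y)
    (Pl : k → g → M → M)
    (hPl : ∀ (l : k) (x : g) (m : M), Pl l x m = ρ x m + l • ν x m)
    (Tl : k → M → g)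
    (hTl : ∀ (l : k) (m : M), Tl l m = T m + l • θ m) :
    (∀ (l : k) (m n : M), Bl l (Tl l m) (Tl l n) = Tl l (Pl l (Tl l m) n)) ↔
    ((∀ m n : M, br (T m) (θ n) + br (θ m) (T n) + ω (T m) (T n)
        - T (ρ (θ m) n) - T (ν (T m) n) - θ (ρ (T m) n) = 0) ∧
     (∀ m n : M, br (θ m) (θ n) + ω (T m) (θ n) + ω (θ m) (T n)
        - T (ν (θ m) n) - θ (ρ (θ m) n) - θ (ν (T m) n) = 0) ∧
     (∀ m n : M, ω (θ m) (θ n) - θ (ν (θ m) n) = 0)) := by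
  have key : ∀ (l : k) (m n : M),
      Bl l (Tl l m) (Tl l n) - Tl l (Pl l (Tl l m) n)
        = l • (br (T m) (θ n) + br (θ m) (T n) + ω (T m) (T n)
            - T (ρ (θ m) n) - T (ν (T m) n) - θ (ρ (T m) n))
        + (l*l) • (br (θ m) (θ n) + ω (T m) (θ n) + ω (θ m) (T n)
            - T (ν (θ m) n) - θ (ρ (θ m) n) - θ (ν (T m) n))
        + (l*l*l) • (ω (θ m) (θ n) - θ (ν (θ m) n)) := by
    intro l m n
    simp only [hBl, hPl, hTl, map_add, map_smul, LinearMap.add_apply,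
      LinearMap.smul_apply, smul_add, smul_smul]
    rw [hT m n]
    module
  constructor
  · intro h
    have H : ∀ m n : M, _ ∧ _ ∧ _ := fun m n =>
      aux_cubic _ _ _ (fun l => by rw [← key l m n, h l m n, sub_self])
    exact ⟨fun m n => (H m n).1, fun m n => (H m n).2.1, fun m n => (H m n).2.2⟩
  · rintro ⟨h1, h2, h3⟩ l m n
    have e := key l m n
    rw [h1 m n, h2 m n, h3 m n, smul_zero, smul_zero, smul_zero, add_zero, add_zero] at e
    exact sub_eq_zero.mp e
end

section
/- Let (M, g, T) be an embedding tensor on a Malcev algebra g with representation ρ on M, and let (N0, N1) be a Nijenhuis operator for (M, g, T). Define θ(m) := T(N0(m)) − N1(T(m)), ω(x,y) := [N1(x),y] + [x,N1(y)] − N1([x,y]), and ν(x,m) := ρ(N1(x))(m) + ρ(x)(N0(m)) − N0(ρ(x)(m)). Then for every λ ∈ k the pair (id_M + λ N0, id_g + λ N1) is a morphism from the deformed structure (T + λθ, [·,·] + λω, ρ + λν) to the original structure (T, [·,·], ρ); explicitly, for all m ∈ M and x,y ∈ g: T(m + λ N0(m)) = (id_g + λ N1)(T(m) + λ θ(m));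 (id_g + λ N1)([x,y] + λ ω(x,y)) = [x + λ N1(x), y + λ N1(y)]; and (id_M + λ N0)(ρ(x)(m) + λ ν(x,m)) = ρ(x + λ N1(x))(m + λ N0(m)). -/
/-- A Nijenhuis operator `(N0, N1)` for an embedding tensor `(M, g, T)` yields, for every
`λ`, a morphism `(id_M + λN0, id_g + λN1)` from the deformed structure
`(T + λθ, [·,·] + λω, ρ + λν)` to the original structure `(T, [·,·], ρ)`. -/
theorem nijenhuis_gives_trivial_deformation_morphism {k g M : Type*} [Field k] [CharZero k]
    [AddCommGroup g] [Module k g] [AddCommGroup M] [Module k M]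
    -- g is a Malcev algebra
    (br : g →ₗ[k] g →ₗ[k] g)
    (skew : ∀ x y : g, br x y = - br y x)
    (sagle : ∀ x y z t : g, br (br x z) (br y t) =
        br (br (br x y) z) t + br (br (br y z) t) x +
        br (br (br z t) x) y + br (br (br t x) y) z)
    -- ρ is a representation of g on M
    (ρ : g →ₗ[k] Module.End k M)
    (hρ : ∀ x y z : g, ρ (br (br x y) z) =
        ρ x * ρ y * ρ z - ρ z * ρ x * ρ y + ρ y * ρ (br z x) - ρ (br y z) * ρ x)
    -- T is an embedding tensor
    (T : M →ₗ[k] g)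
    (hT : ∀ m n : M, br (T m) (T n) = T (ρ (T m) n))
    -- (N0, N1) is a Nijenhuis operator
    (N0 : M →ₗ[k] M) (N1 : g →ₗ[k] g)
    (hN1 : ∀ m : M, N1 (T (N0 m) - N1 (T m)) = 0)
    (hN2 : ∀ x y : g, N1 (br (N1 x) y + br x (N1 y) - N1 (br x y)) = br (N1 x) (N1 y))
    (hN3 : ∀ (x : g) (m : M),
        N0 (ρ (N1 x) m + ρ x (N0 m) - N0 (ρ x m)) = ρ (N1 x) (N0 m))
    -- the induced 2-cochain
    (θ : M → g) (hθ : ∀ m : M, θ m = T (N0 m) - N1 (T m))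
    (ω : g → g → g) (hωdef : ∀ x y : g, ω x y = br (N1 x) y + br x (N1 y) - N1 (br x y))
    (ν : g → M → M) (hνdef : ∀ (x : g) (m : M),
        ν x m = ρ (N1 x) m + ρ x (N0 m) - N0 (ρ x m)) :
    ∀ l : k,
      (∀ m : M, T (m + l • N0 m) = (T m + l • θ m) + l • N1 (T m + l • θ m)) ∧
      (∀ x y : g, (br x y + l • ω x y) + l • N1 (br x y + l • ω x y)
          = br (x + l • N1 x) (y + l • N1 y)) ∧
      (∀ (x : g) (m : M), (ρ x m + l • ν x m) + l • N0 (ρ x m + l • ν x m)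
          = ρ (x + l • N1 x) (m + l • N0 m)) := by
  intro l
  refine ⟨fun m => ?_, fun x y => ?_, fun x m => ?_⟩
  · have h1 : N1 (T (N0 m)) = N1 (N1 (T m)) :=
      sub_eq_zero.mp (by simpa [map_sub] using hN1 m)
    simp only [hθ, map_add, map_smul, map_sub, h1]
    module
  · have h2 : N1 (N1 (br x y)) = N1 (br (N1 x) y) + N1 (br x (N1 y)) - br (N1 x) (N1 y) := by
      have := hN2 x y
      rw [map_sub, map_add, sub_eq_iff_eq_add] at this
      rw [eq_comm, sub_eq_iff_eq_add, this]; abel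
    simp only [hωdef, map_add, map_smul, map_sub, h2, LinearMap.add_apply, LinearMap.smul_apply]
    module
  · have h3 : N0 (N0 (ρ x m)) = N0 (ρ (N1 x) m) + N0 (ρ x (N0 m)) - ρ (N1 x) (N0 m) := by
      have := hN3 x m
      rw [map_sub, map_add, sub_eq_iff_eq_add] at this
      rw [eq_comm, sub_eq_iff_eq_add, this]; abel
    simp only [hνdef, map_add, map_smul, map_sub, h3, LinearMap.add_apply, LinearMap.smul_apply]
    module
end

section
/- Let (M, g, T) be an embedding tensor on a Malcev algebra g with representation ρ on M. Let θ : M → g be linear, ω : g × g → g skew-symmetric bilinear, ν : g × M → M bilinear, and let N0 : M → M, N1 : g → g be linear maps. Then the pair (id_M + λ N0, id_g + λ N1) is a morphism from the deformed structure (T + λθ, [·,·] + λω, ρ + λν) to (T, [·,·], ρ) for every λ ∈ k — i.e., T((id_M + λN0)(m)) = (id_g + λN1)(T(m) + λθ(m)), (id_g + λN1)([x,y] + λω(x,y)) = [x + λN1(x), y + λN1(y)], and (id_M + λN0)(ρ(x)(m) + λν(x,m)) = ρ(x + λN1(x))((id_M + λN0)(m)) for all λ ∈ k, m ∈ M, x,y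 ∈ g — if and only if: θ(m) = T(N0(m)) − N1(T(m)) and N1(θ(m)) = 0 for all m; ω(x,y) = [N1(x),y] + [x,N1(y)] − N1([x,y]) and N1(ω(x,y)) = [N1(x),N1(y)] for all x,y; and ν(x,m) = ρ(N1(x))(m) + ρ(x)(N0(m)) − N0(ρ(x)(m)) and N0(ν(x,m)) = ρ(N1(x))(N0(m)) for all x, m. -/
/-- The pair `(id_M + λN0, id_g + λN1)` is a morphism from the deformed structure
`(T + λθ, [·,·] + λω, ρ + λν)` to `(T, [·,·], ρ)` for every `λ` if and only if
`(θ, ω, ν)` is the coboundary of `(N0, N1)` and the extra Nijenhuis-type conditions hold. -/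
theorem trivial_deformation_iff_nijenhuis_conditions {k g M : Type*} [Field k] [CharZero k]
    [AddCommGroup g] [Module k g] [AddCommGroup M] [Module k M]
    -- g is a Malcev algebra
    (br : g →ₗ[k] g →ₗ[k] g)
    (skew : ∀ x y : g, br x y = - br y x)
    (sagle : ∀ x y z t : g, br (br x z) (br y t) =
        br (br (br x y) z) t + br (br (br y z) t) x +
        br (br (br z t) x) y + br (br (br t x) y) z)
    -- ρ is a representation of g on M
    (ρ : g →ₗ[k] Module.End k M)
    (hρ : ∀ x y z : g, ρ (br (br x y) z) =
        ρ x * ρ y * ρ z - ρ z * ρ x * ρ y + ρ y * ρ (br z x) - ρ (br y z) * ρ x)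
    -- T is an embedding tensor
    (T : M →ₗ[k] g)
    (hT : ∀ m n : M, br (T m) (T n) = T (ρ (T m) n))
    -- the deformation data
    (θ : M →ₗ[k] g)
    (ω : g →ₗ[k] g →ₗ[k] g)
    (hω : ∀ x y : g, ω x y = - ω y x)
    (ν : g →ₗ[k] M →ₗ[k] M)
    -- the candidate pair
    (N0 : M →ₗ[k] M) (N1 : g →ₗ[k] g) :
    (∀ (l : k),
      (∀ m : M, T (m + l • N0 m) = (T m + l • θ m) + l • N1 (T m + l • θ m)) ∧
      (∀ x y : g, (br x y + l • ω x y) + l • N1 (br x y + l • ω x y)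
          = br (x + l • N1 x) (y + l • N1 y)) ∧
      (∀ (x : g) (m : M), (ρ x m + l • ν x m) + l • N0 (ρ x m + l • ν x m)
          = ρ (x + l • N1 x) (m + l • N0 m))) ↔
    ((∀ m : M, θ m = T (N0 m) - N1 (T m)) ∧
     (∀ m : M, N1 (θ m) = 0) ∧
     (∀ x y : g, ω x y = br (N1 x) y + br x (N1 y) - N1 (br x y)) ∧
     (∀ x y : g, N1 (ω x y) = br (N1 x) (N1 y)) ∧
     (∀ (x : g) (m : M), ν x m = ρ (N1 x) m + ρ x (N0 m) - N0 (ρ x m)) ∧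
     (∀ (x : g) (m : M), N0 (ν x m) = ρ (N1 x) (N0 m))) := by
  constructor
  · intro h
    obtain ⟨hT1, hB1, hR1⟩ := h 1
    obtain ⟨hT2, hB2, hR2⟩ := h (-1)
    simp only [one_smul, neg_smul, map_add, map_neg, map_smul, smul_neg, neg_neg,
      LinearMap.add_apply, LinearMap.smul_apply, LinearMap.neg_apply] at hT1 hB1 hR1 hT2 hB2 hR2
    refine ⟨fun m => ?_, fun m => ?_, fun x y => ?_, fun x y => ?_, fun x m => ?_, fun x m => ?_⟩
    · linear_combination (norm := module) (-(2:k)⁻¹) • (hT1 m) + ((2:k)⁻¹) • (hT2 m)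
    · linear_combination (norm := module) (-(2:k)⁻¹) • (hT1 m) - ((2:k)⁻¹) • (hT2 m)
    · linear_combination (norm := module) ((2:k)⁻¹) • (hB1 x y) - ((2:k)⁻¹) • (hB2 x y)
    · linear_combination (norm := module) ((2:k)⁻¹) • (hB1 x y) + ((2:k)⁻¹) • (hB2 x y)
    · linear_combination (norm := module) ((2:k)⁻¹) • (hR1 x m) - ((2:k)⁻¹) • (hR2 x m)
    · linear_combination (norm := module) ((2:k)⁻¹) • (hR1 x m) + ((2:k)⁻¹) • (hR2 x m)
  · rintro ⟨c1, c2, c3, c4, c5, c6⟩ l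
    refine ⟨fun m => ?_, fun x y => ?_, fun x m => ?_⟩
    · simp only [map_add, map_smul, c2, smul_zero, add_zero]
      simp only [c1, map_sub]
      module
    · simp only [map_add, map_smul, LinearMap.add_apply, LinearMap.smul_apply, c4]
      simp only [c3, map_sub, LinearMap.sub_apply]
      module
    · simp only [map_add, map_smul, LinearMap.add_apply, LinearMap.smul_apply, c6]
      simp only [c5, map_sub, LinearMap.sub_apply]
      module
end

section
/- Let (M, g, T) be an embedding tensor on a Malcev algebra g with representation ρ on M, and let (N0, N1) be a Nijenhuis operator for (M, g, T). Define θ(m) := T(N0(m)) − N1(T(m)), ω(x,y) := [N1(x),y] + [x,N1(y)] − N1([x,y]), and ν(x,m) := ρ(N1(x))(m) + ρ(x)(N0(m)) − N0(ρ(x)(m)). Then for every λ ∈ k the deformed structure is again an embedding tensor on a Malcev algebra: the bracket [x,y]_λ := [x,y] + λ ω(x,y) is skew-symmetric and satisfies the Sagle identity, ρ_λ(x)(m) := ρ(x)(m) + λ ν(x,m) defines a representation of (g, [·,·]_λ) on M, and T_λ(m) := T(m) + λ θ(m) satisfies [T_λ(m), T_λ(n)]_λ = T_λ(ρ_λ(T_λ(m))(n))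 for all m,n ∈ M. -/
private lemma aux_coeff5 {k V : Type*} [Field k] [CharZero k] [AddCommGroup V] [Module k V]
    (c0 c1 c2 c3 c4 : V)
    (h : ∀ l : k, c0 + l • c1 + (l*l) • c2 + (l*l*l) • c3 + (l*l*l*l) • c4 = 0) :
    c0 = 0 ∧ c1 = 0 ∧ c2 = 0 ∧ c3 = 0 ∧ c4 = 0 := by
  refine ⟨?_, ?_, ?_, ?_, ?_⟩
  · linear_combination (norm := module) h 0
  · linear_combination (norm := module)
      ((2:k)/3) • h 1 - ((2:k)/3) • h (-1) - ((1:k)/12) • h 2 + ((1:k)/12) • h (-2)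
  · linear_combination (norm := module)
      (-(5:k)/4) • h 0 + ((2:k)/3) • h 1 + ((2:k)/3) • h (-1)
      - ((1:k)/24) • h 2 - ((1:k)/24) • h (-2)
  · linear_combination (norm := module)
      (-(1:k)/6) • h 1 + ((1:k)/6) • h (-1) + ((1:k)/12) • h 2 - ((1:k)/12) • h (-2)
  · linear_combination (norm := module)
      ((1:k)/4) • h 0 - ((1:k)/6) • h 1 - ((1:k)/6) • h (-1)
      + ((1:k)/24) • h 2 + ((1:k)/24) • h (-2)

private lemma aux_cubic_vanish {k V : Type*} [Field k] [CharZero k] [AddCommGroup V] [Module k V]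
    (N : V →ₗ[k] V) (c0 c1 c2 c3 : V)
    (h : ∀ l : k, (c0 + l • c1 + (l*l) • c2 + (l*l*l) • c3) +
        l • N (c0 + l • c1 + (l*l) • c2 + (l*l*l) • c3) = 0) :
    ∀ l : k, c0 + l • c1 + (l*l) • c2 + (l*l*l) • c3 = 0 := by
  have h' : ∀ l : k, c0 + l • (c1 + N c0) + (l*l) • (c2 + N c1) + (l*l*l) • (c3 + N c2)
      + (l*l*l*l) • (N c3) = 0 := by
    intro l
    have := h l
    simp only [map_add, map_smul] at this
    linear_combination (norm := module) this
  obtain ⟨e0, e1, e2, e3, e4⟩ := aux_coeff5 _ _ _ _ _ h'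
  have z0 : c0 = 0 := e0
  have z1 : c1 = 0 := by rw [z0, map_zero, add_zero] at e1; exact e1
  have z2 : c2 = 0 := by rw [z1, map_zero, add_zero] at e2; exact e2
  have z3 : c3 = 0 := by rw [z2, map_zero, add_zero] at e3; exact e3
  intro l
  rw [z0, z1, z2, z3]
  simp

private lemma aux_poly_vanish {k V : Type*} [Field k] [CharZero k] [AddCommGroup V] [Module k V]
    (N : V →ₗ[k] V) (D : k → V) {c0 c1 c2 c3 : V}
    (hp : ∀ l : k, D l = c0 + l • c1 + (l*l) • c2 + (l*l*l) • c3)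
    (hz : ∀ l : k, D l + l • N (D l) = 0) :
    ∀ l : k, D l = 0 := by
  have hv := aux_cubic_vanish N c0 c1 c2 c3 (fun l => by rw [← hp l]; exact hz l)
  intro l
  rw [hp l]
  exact hv l



set_option maxHeartbeats 4000000 in
/-- A Nijenhuis operator `(N0, N1)` for an embedding tensor `(M, g, T)` generates a
deformation: for every `λ`, the deformed bracket `[·,·]_λ` is skew-symmetric and satisfies
the Sagle identity, `ρ_λ` is a representation of `(g, [·,·]_λ)` on `M`, and `T_λ`
satisfies the embedding tensor identity. -/
theorem nijenhuis_generates_deformation {k g M : Type*} [Field k] [CharZero k]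
    [AddCommGroup g] [Module k g] [AddCommGroup M] [Module k M]
    -- g is a Malcev algebra
    (br : g →ₗ[k] g →ₗ[k] g)
    (skew : ∀ x y : g, br x y = - br y x)
    (sagle : ∀ x y z t : g, br (br x z) (br y t) =
        br (br (br x y) z) t + br (br (br y z) t) x +
        br (br (br z t) x) y + br (br (br t x) y) z)
    -- ρ is a representation of g on M
    (ρ : g →ₗ[k] Module.End k M)
    (hρ : ∀ x y z : g, ρ (br (br x y) z) =
        ρ x * ρ y * ρ z - ρ z * ρ x * ρ y + ρ y * ρ (br z x) - ρ (br y z) * ρ x)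
    -- T is an embedding tensor
    (T : M →ₗ[k] g)
    (hT : ∀ m n : M, br (T m) (T n) = T (ρ (T m) n))
    -- (N0, N1) is a Nijenhuis operator
    (N0 : M →ₗ[k] M) (N1 : g →ₗ[k] g)
    (hN1 : ∀ m : M, N1 (T (N0 m) - N1 (T m)) = 0)
    (hN2 : ∀ x y : g, N1 (br (N1 x) y + br x (N1 y) - N1 (br x y)) = br (N1 x) (N1 y))
    (hN3 : ∀ (x : g) (m : M),
        N0 (ρ (N1 x) m + ρ x (N0 m) - N0 (ρ x m)) = ρ (N1 x) (N0 m))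
    -- the induced 2-cochain
    (θ : M → g) (hθ : ∀ m : M, θ m = T (N0 m) - N1 (T m))
    (ω : g → g → g) (hωdef : ∀ x y : g, ω x y = br (N1 x) y + br x (N1 y) - N1 (br x y))
    (ν : g → M → M) (hνdef : ∀ (x : g) (m : M),
        ν x m = ρ (N1 x) m + ρ x (N0 m) - N0 (ρ x m))
    -- the deformed structure maps
    (Bl : k → g → g → g)
    (hBl : ∀ (l : k) (x y : g), Bl l x y = br x y + l • ω x y)
    (Pl : k → g → M → M)
    (hPl : ∀ (l : k) (x : g) (m : M), Pl l x m = ρ x m + l • ν x m)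
    (Tl : k → M → g)
    (hTl : ∀ (l : k) (m : M), Tl l m = T m + l • θ m) :
    ∀ l : k,
      -- the deformed bracket is skew-symmetric and satisfies the Sagle identity
      (∀ x y : g, Bl l x y = - Bl l y x) ∧
      (∀ x y z t : g, Bl l (Bl l x z) (Bl l y t) =
          Bl l (Bl l (Bl l x y) z) t + Bl l (Bl l (Bl l y z) t) x +
          Bl l (Bl l (Bl l z t) x) y + Bl l (Bl l (Bl l t x) y) z) ∧
      -- ρ_λ is a representation of (g, [·,·]_λ) on M
      (∀ (x y z : g) (m : M), Pl l (Bl l (Bl l x y) z) m =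
          Pl l x (Pl l y (Pl l z m)) - Pl l z (Pl l x (Pl l y m))
          + Pl l y (Pl l (Bl l z x) m) - Pl l (Bl l y z) (Pl l x m)) ∧
      -- T_λ satisfies the embedding tensor identity
      (∀ m n : M, Bl l (Tl l m) (Tl l n) = Tl l (Pl l (Tl l m) n)) := by

  have phiB : ∀ (l : k) (x y : g),
      br (x + l • N1 x) (y + l • N1 y) = Bl l x y + l • N1 (Bl l x y) := by
    intro l x y
    have e : N1 (Bl l x y) = N1 (br x y) + l • br (N1 x) (N1 y) := by
      rw [hBl, hωdef, map_add, map_smul, hN2]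
    rw [e, hBl, hωdef]
    simp only [map_add, map_smul, LinearMap.add_apply, LinearMap.smul_apply]
    module
  have phiP : ∀ (l : k) (x : g) (m : M),
      ρ (x + l • N1 x) (m + l • N0 m) = Pl l x m + l • N0 (Pl l x m) := by
    intro l x m
    have e : N0 (Pl l x m) = N0 (ρ x m) + l • ρ (N1 x) (N0 m) := by
      rw [hPl, hνdef, map_add, map_smul, hN3]
    rw [e, hPl, hνdef]
    simp only [map_add, map_smul, LinearMap.add_apply, LinearMap.smul_apply]
    module
  have phiT : ∀ (l : k) (m : M),
      T (m + l • N0 m) = Tl l m + l • N1 (Tl l m) := by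
    intro l m
    have e : N1 (Tl l m) = N1 (T m) := by
      rw [hTl, hθ, map_add, map_smul]
      linear_combination (norm := module) l • hN1 m
    rw [e, hTl, hθ]
    simp only [map_add, map_smul]
    module
  have g1 : ∀ (l : k) (x y : g), Bl l x y = - Bl l y x := by
    intro l x y
    have e := congrArg N1 (skew x y)
    rw [map_neg] at e
    rw [hBl, hBl, hωdef, hωdef]
    linear_combination (norm := module) skew x y + l • skew (N1 x) y + l • skew x (N1 y) - l • e

  have ωadd1 : ∀ a b c : g, ω (a + b) c = ω a c + ω b c := by
    intro a b c
    simp only [hωdef, map_add, LinearMap.add_apply]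
    module
  have ωadd2 : ∀ a b c : g, ω a (b + c) = ω a b + ω a c := by
    intro a b c
    simp only [hωdef, map_add, LinearMap.add_apply]
    module
  have ωsmul1 : ∀ (u : k) (a b : g), ω (u • a) b = u • ω a b := by
    intro u a b
    simp only [hωdef, map_smul, LinearMap.smul_apply]
    module
  have ωsmul2 : ∀ (u : k) (a b : g), ω a (u • b) = u • ω a b := by
    intro u a b
    simp only [hωdef, map_smul, LinearMap.smul_apply]
    module
  have νadd1 : ∀ (a b : g) (m : M), ν (a + b) m = ν a m + ν b m := by
    intro a b m
    simp only [hνdef, map_add, LinearMap.add_apply]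
    module
  have νadd2 : ∀ (a : g) (m n : M), ν a (m + n) = ν a m + ν a n := by
    intro a m n
    simp only [hνdef, map_add, LinearMap.add_apply]
    module
  have νsmul1 : ∀ (u : k) (a : g) (m : M), ν (u • a) m = u • ν a m := by
    intro u a m
    simp only [hνdef, map_smul, LinearMap.smul_apply]
    module
  have νsmul2 : ∀ (u : k) (a : g) (m : M), ν a (u • m) = u • ν a m := by
    intro u a m
    simp only [hνdef, map_smul, LinearMap.smul_apply]
    module
  have θadd : ∀ m n : M, θ (m + n) = θ m + θ n := by
    intro m n
    simp only [hθ, map_add]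
    module
  have θsmul : ∀ (u : k) (m : M), θ (u • m) = u • θ m := by
    intro u m
    simp only [hθ, map_smul]
    module
  -- Goal 2 (Sagle)
  have g2 : ∀ (l : k) (x y z t : g), Bl l (Bl l x z) (Bl l y t) =
      Bl l (Bl l (Bl l x y) z) t + Bl l (Bl l (Bl l y z) t) x +
      Bl l (Bl l (Bl l z t) x) y + Bl l (Bl l (Bl l t x) y) z := by
    intro l x y z t
    have hz : ∀ u : k, (Bl u (Bl u (x) (z)) (Bl u (y) (t)) - Bl u (Bl u (Bl u (x) (y)) (z)) (t) - Bl u (Bl u (Bl u (y) (z)) (t)) (x) - Bl u (Bl u (Bl u (z) (t)) (x)) (y) - Bl u (Bl u (Bl u (t) (x)) (y)) (z)) + u • N1 (Bl u (Bl u (x) (z)) (Bl u (y) (t)) - Bl u (Bl u (Bl u (x) (y)) (z)) (t) - Bl u (Bl u (Bl u (y) (z)) (t)) (x) - Bl u (Bl u (Bl u (z) (t)) (x)) (y) - Bl u (Bl u (Bl u (t) (x)) (y)) (z)) = 0 := by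
      intro u
      have hs := sagle (x + u • N1 x) (y + u • N1 y) (z + u • N1 z) (t + u • N1 t)
      simp only [phiB] at hs
      simp only [map_sub, map_add]
      linear_combination (norm := module) hs
    have hp : ∀ u : k, Bl u (Bl u (x) (z)) (Bl u (y) (t)) - Bl u (Bl u (Bl u (x) (y)) (z)) (t) - Bl u (Bl u (Bl u (y) (z)) (t)) (x) - Bl u (Bl u (Bl u (z) (t)) (x)) (y) - Bl u (Bl u (Bl u (t) (x)) (y)) (z) = (Bl 0 (Bl 0 (x) (z)) (Bl 0 (y) (t)) - Bl 0 (Bl 0 (Bl 0 (x) (y)) (z)) (t) - Bl 0 (Bl 0 (Bl 0 (y) (z)) (t)) (x) - Bl 0 (Bl 0 (Bl 0 (z) (t)) (x)) (y) - Bl 0 (Bl 0 (Bl 0 (t) (x)) (y)) (z)) + u • ((Bl 1 (Bl 1 (x) (z)) (Bl 1 (y) (t)) - Bl 1 (Bl 1 (Bl 1 (x) (y)) (z)) (t) - Bl 1 (Bl 1 (Bl 1 (y) (z)) (t)) (x) - Bl 1 (Bl 1 (Bl 1 (z) (t)) (x)) (y) - Bl 1 (Bl 1 (Bl 1 (t)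 (x)) (y)) (z)) - (Bl 0 (Bl 0 (x) (z)) (Bl 0 (y) (t)) - Bl 0 (Bl 0 (Bl 0 (x) (y)) (z)) (t) - Bl 0 (Bl 0 (Bl 0 (y) (z)) (t)) (x) - Bl 0 (Bl 0 (Bl 0 (z) (t)) (x)) (y) - Bl 0 (Bl 0 (Bl 0 (t) (x)) (y)) (z)) - ((2:k)⁻¹ • ((Bl 1 (Bl 1 (x) (z)) (Bl 1 (y) (t)) - Bl 1 (Bl 1 (Bl 1 (x) (y)) (z)) (t) - Bl 1 (Bl 1 (Bl 1 (y) (z)) (t)) (x) - Bl 1 (Bl 1 (Bl 1 (z) (t)) (x)) (y) - Bl 1 (Bl 1 (Bl 1 (t) (x)) (y)) (z)) + (Bl (-1) (Bl (-1) (x) (z)) (Bl (-1) (y) (t)) - Bl (-1) (Bl (-1) (Bl (-1) (x) (y)) (z)) (t) - Bl (-1) (Bl (-1) (Bl (-1) (y) (z)) (t)) (x) - Bl (-1) (Bl (-1) (Bl (-1) (z) (t)) (x)) (y) - Bl (-1) (Bl (-1) (Bl (-1) (t) (x)) (y)) (z))) - (Bl 0 (Bl 0 (x) (z)) (Bl 0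 (y) (t)) - Bl 0 (Bl 0 (Bl 0 (x) (y)) (z)) (t) - Bl 0 (Bl 0 (Bl 0 (y) (z)) (t)) (x) - Bl 0 (Bl 0 (Bl 0 (z) (t)) (x)) (y) - Bl 0 (Bl 0 (Bl 0 (t) (x)) (y)) (z))) - ((6:k)⁻¹ • ((Bl 2 (Bl 2 (x) (z)) (Bl 2 (y) (t)) - Bl 2 (Bl 2 (Bl 2 (x) (y)) (z)) (t) - Bl 2 (Bl 2 (Bl 2 (y) (z)) (t)) (x) - Bl 2 (Bl 2 (Bl 2 (z) (t)) (x)) (y) - Bl 2 (Bl 2 (Bl 2 (t) (x)) (y)) (z)) + (3:k) • (Bl 0 (Bl 0 (x) (z)) (Bl 0 (y) (t)) - Bl 0 (Bl 0 (Bl 0 (x) (y)) (z)) (t) - Bl 0 (Bl 0 (Bl 0 (y) (z)) (t)) (x) - Bl 0 (Bl 0 (Bl 0 (z) (t)) (x)) (y) - Bl 0 (Bl 0 (Bl 0 (t) (x)) (y)) (z)) - (3:k) • (Bl 1 (Bl 1 (x) (z)) (Bl 1 (y) (t)) - Bl 1 (Bl 1 (Bl 1 (x) (y)) (z)) (t)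 - Bl 1 (Bl 1 (Bl 1 (y) (z)) (t)) (x) - Bl 1 (Bl 1 (Bl 1 (z) (t)) (x)) (y) - Bl 1 (Bl 1 (Bl 1 (t) (x)) (y)) (z)) - (Bl (-1) (Bl (-1) (x) (z)) (Bl (-1) (y) (t)) - Bl (-1) (Bl (-1) (Bl (-1) (x) (y)) (z)) (t) - Bl (-1) (Bl (-1) (Bl (-1) (y) (z)) (t)) (x) - Bl (-1) (Bl (-1) (Bl (-1) (z) (t)) (x)) (y) - Bl (-1) (Bl (-1) (Bl (-1) (t) (x)) (y)) (z))))) + (u*u) • ((2:k)⁻¹ • ((Bl 1 (Bl 1 (x) (z)) (Bl 1 (y) (t)) - Bl 1 (Bl 1 (Bl 1 (x) (y)) (z)) (t) - Bl 1 (Bl 1 (Bl 1 (y) (z)) (t)) (x) - Bl 1 (Bl 1 (Bl 1 (z) (t)) (x)) (y) - Bl 1 (Bl 1 (Bl 1 (t) (x)) (y)) (z)) + (Bl (-1) (Bl (-1) (x) (z)) (Bl (-1) (y) (t)) - Bl (-1) (Bl (-1) (Bl (-1) (x) (y)) (z)) (t) - Bl (-1) (Bl (-1) (Bl (-1) (y)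 (z)) (t)) (x) - Bl (-1) (Bl (-1) (Bl (-1) (z) (t)) (x)) (y) - Bl (-1) (Bl (-1) (Bl (-1) (t) (x)) (y)) (z))) - (Bl 0 (Bl 0 (x) (z)) (Bl 0 (y) (t)) - Bl 0 (Bl 0 (Bl 0 (x) (y)) (z)) (t) - Bl 0 (Bl 0 (Bl 0 (y) (z)) (t)) (x) - Bl 0 (Bl 0 (Bl 0 (z) (t)) (x)) (y) - Bl 0 (Bl 0 (Bl 0 (t) (x)) (y)) (z))) + (u*u*u) • ((6:k)⁻¹ • ((Bl 2 (Bl 2 (x) (z)) (Bl 2 (y) (t)) - Bl 2 (Bl 2 (Bl 2 (x) (y)) (z)) (t) - Bl 2 (Bl 2 (Bl 2 (y) (z)) (t)) (x) - Bl 2 (Bl 2 (Bl 2 (z) (t)) (x)) (y) - Bl 2 (Bl 2 (Bl 2 (t) (x)) (y)) (z)) + (3:k) • (Bl 0 (Bl 0 (x) (z)) (Bl 0 (y) (t)) - Bl 0 (Bl 0 (Bl 0 (x) (y)) (z)) (t) - Bl 0 (Bl 0 (Bl 0 (y) (z)) (t)) (x) - Bl 0 (Bl 0 (Bl 0 (z)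 (t)) (x)) (y) - Bl 0 (Bl 0 (Bl 0 (t) (x)) (y)) (z)) - (3:k) • (Bl 1 (Bl 1 (x) (z)) (Bl 1 (y) (t)) - Bl 1 (Bl 1 (Bl 1 (x) (y)) (z)) (t) - Bl 1 (Bl 1 (Bl 1 (y) (z)) (t)) (x) - Bl 1 (Bl 1 (Bl 1 (z) (t)) (x)) (y) - Bl 1 (Bl 1 (Bl 1 (t) (x)) (y)) (z)) - (Bl (-1) (Bl (-1) (x) (z)) (Bl (-1) (y) (t)) - Bl (-1) (Bl (-1) (Bl (-1) (x) (y)) (z)) (t) - Bl (-1) (Bl (-1) (Bl (-1) (y) (z)) (t)) (x) - Bl (-1) (Bl (-1) (Bl (-1) (z) (t)) (x)) (y) - Bl (-1) (Bl (-1) (Bl (-1) (t) (x)) (y)) (z)))) := by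
      intro u
      simp only [hBl, ωadd1, ωadd2, ωsmul1, ωsmul2, map_add, map_smul,
        LinearMap.add_apply, LinearMap.smul_apply]
      module
    have hv := aux_poly_vanish N1 (fun u => Bl u (Bl u (x) (z)) (Bl u (y) (t)) - Bl u (Bl u (Bl u (x) (y)) (z)) (t) - Bl u (Bl u (Bl u (y) (z)) (t)) (x) - Bl u (Bl u (Bl u (z) (t)) (x)) (y) - Bl u (Bl u (Bl u (t) (x)) (y)) (z)) hp hz l
    beta_reduce at hv
    linear_combination (norm := module) hv
  -- Goal 3 (representation)
  have g3 : ∀ (l : k) (x y z : g) (m : M), Pl l (Bl l (Bl l x y) z) m =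
      Pl l x (Pl l y (Pl l z m)) - Pl l z (Pl l x (Pl l y m))
      + Pl l y (Pl l (Bl l z x) m) - Pl l (Bl l y z) (Pl l x m) := by
    intro l x y z m
    have hz : ∀ u : k, (Pl u (Bl u (Bl u (x) (y)) (z)) (m) - (Pl u (x) (Pl u (y) (Pl u (z) (m))) - Pl u (z) (Pl u (x) (Pl u (y) (m))) + Pl u (y) (Pl u (Bl u (z) (x)) (m)) - Pl u (Bl u (y) (z)) (Pl u (x) (m)))) + u • N0 (Pl u (Bl u (Bl u (x) (y)) (z)) (m) - (Pl u (x) (Pl u (y) (Pl u (z) (m))) - Pl u (z) (Pl u (x) (Pl u (y) (m))) + Pl u (y) (Pl u (Bl u (z) (x)) (m)) - Pl u (Bl u (y) (z)) (Pl u (x) (m)))) = 0 := by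
      intro u
      have hs := LinearMap.congr_fun
        (hρ (x + u • N1 x) (y + u • N1 y) (z + u • N1 z)) (m + u • N0 m)
      simp only [LinearMap.sub_apply, LinearMap.add_apply, Module.End.mul_apply] at hs
      simp only [phiB, phiP] at hs
      simp only [map_sub, map_add]
      linear_combination (norm := module) hs
    have hp : ∀ u : k, Pl u (Bl u (Bl u (x) (y)) (z)) (m) - (Pl u (x) (Pl u (y) (Pl u (z) (m))) - Pl u (z) (Pl u (x) (Pl u (y) (m))) + Pl u (y) (Pl u (Bl u (z) (x)) (m)) - Pl u (Bl u (y) (z)) (Pl u (x) (m))) = (Pl 0 (Bl 0 (Bl 0 (x) (y)) (z)) (m) - (Pl 0 (x) (Pl 0 (y) (Pl 0 (z) (m))) - Pl 0 (z) (Pl 0 (x) (Pl 0 (y) (m))) + Pl 0 (y) (Pl 0 (Bl 0 (z) (x)) (m)) - Pl 0 (Bl 0 (y) (z)) (Pl 0 (x) (m)))) + u • ((Pl 1 (Bl 1 (Bl 1 (x) (y)) (z)) (m) - (Pl 1 (x) (Pl 1 (y) (Pl 1 (z) (m))) - Pl 1 (z) (Pl 1 (x) (Pl 1 (y) (m)))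 + Pl 1 (y) (Pl 1 (Bl 1 (z) (x)) (m)) - Pl 1 (Bl 1 (y) (z)) (Pl 1 (x) (m)))) - (Pl 0 (Bl 0 (Bl 0 (x) (y)) (z)) (m) - (Pl 0 (x) (Pl 0 (y) (Pl 0 (z) (m))) - Pl 0 (z) (Pl 0 (x) (Pl 0 (y) (m))) + Pl 0 (y) (Pl 0 (Bl 0 (z) (x)) (m)) - Pl 0 (Bl 0 (y) (z)) (Pl 0 (x) (m)))) - ((2:k)⁻¹ • ((Pl 1 (Bl 1 (Bl 1 (x) (y)) (z)) (m) - (Pl 1 (x) (Pl 1 (y) (Pl 1 (z) (m))) - Pl 1 (z) (Pl 1 (x) (Pl 1 (y) (m))) + Pl 1 (y) (Pl 1 (Bl 1 (z) (x)) (m)) - Pl 1 (Bl 1 (y) (z)) (Pl 1 (x) (m)))) + (Pl (-1) (Bl (-1) (Bl (-1) (x) (y)) (z)) (m) - (Pl (-1) (x) (Pl (-1) (y) (Pl (-1) (z) (m))) - Pl (-1) (z) (Pl (-1) (x) (Pl (-1) (y) (m))) + Pl (-1) (y) (Pl (-1) (Bl (-1) (z) (x)) (m)) - Pl (-1) (Bl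 (-1) (y) (z)) (Pl (-1) (x) (m))))) - (Pl 0 (Bl 0 (Bl 0 (x) (y)) (z)) (m) - (Pl 0 (x) (Pl 0 (y) (Pl 0 (z) (m))) - Pl 0 (z) (Pl 0 (x) (Pl 0 (y) (m))) + Pl 0 (y) (Pl 0 (Bl 0 (z) (x)) (m)) - Pl 0 (Bl 0 (y) (z)) (Pl 0 (x) (m))))) - ((6:k)⁻¹ • ((Pl 2 (Bl 2 (Bl 2 (x) (y)) (z)) (m) - (Pl 2 (x) (Pl 2 (y) (Pl 2 (z) (m))) - Pl 2 (z) (Pl 2 (x) (Pl 2 (y) (m))) + Pl 2 (y) (Pl 2 (Bl 2 (z) (x)) (m)) - Pl 2 (Bl 2 (y) (z)) (Pl 2 (x) (m)))) + (3:k) • (Pl 0 (Bl 0 (Bl 0 (x) (y)) (z)) (m) - (Pl 0 (x) (Pl 0 (y) (Pl 0 (z) (m))) - Pl 0 (z) (Pl 0 (x) (Pl 0 (y) (m))) + Pl 0 (y) (Pl 0 (Bl 0 (z) (x)) (m)) - Pl 0 (Bl 0 (y) (z)) (Pl 0 (x) (m)))) - (3:k) • (Pl 1 (Bl 1 (Bl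 1 (x) (y)) (z)) (m) - (Pl 1 (x) (Pl 1 (y) (Pl 1 (z) (m))) - Pl 1 (z) (Pl 1 (x) (Pl 1 (y) (m))) + Pl 1 (y) (Pl 1 (Bl 1 (z) (x)) (m)) - Pl 1 (Bl 1 (y) (z)) (Pl 1 (x) (m)))) - (Pl (-1) (Bl (-1) (Bl (-1) (x) (y)) (z)) (m) - (Pl (-1) (x) (Pl (-1) (y) (Pl (-1) (z) (m))) - Pl (-1) (z) (Pl (-1) (x) (Pl (-1) (y) (m))) + Pl (-1) (y) (Pl (-1) (Bl (-1) (z) (x)) (m)) - Pl (-1) (Bl (-1) (y) (z)) (Pl (-1) (x) (m))))))) + (u*u) • ((2:k)⁻¹ • ((Pl 1 (Bl 1 (Bl 1 (x) (y)) (z)) (m) - (Pl 1 (x) (Pl 1 (y) (Pl 1 (z) (m))) - Pl 1 (z) (Pl 1 (x) (Pl 1 (y) (m))) + Pl 1 (y) (Pl 1 (Bl 1 (z) (x)) (m)) - Pl 1 (Bl 1 (y) (z)) (Pl 1 (x) (m)))) + (Pl (-1) (Bl (-1) (Bl (-1) (x) (y)) (z)) (m) - (Pl (-1) (x) (Pl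 (-1) (y) (Pl (-1) (z) (m))) - Pl (-1) (z) (Pl (-1) (x) (Pl (-1) (y) (m))) + Pl (-1) (y) (Pl (-1) (Bl (-1) (z) (x)) (m)) - Pl (-1) (Bl (-1) (y) (z)) (Pl (-1) (x) (m))))) - (Pl 0 (Bl 0 (Bl 0 (x) (y)) (z)) (m) - (Pl 0 (x) (Pl 0 (y) (Pl 0 (z) (m))) - Pl 0 (z) (Pl 0 (x) (Pl 0 (y) (m))) + Pl 0 (y) (Pl 0 (Bl 0 (z) (x)) (m)) - Pl 0 (Bl 0 (y) (z)) (Pl 0 (x) (m))))) + (u*u*u) • ((6:k)⁻¹ • ((Pl 2 (Bl 2 (Bl 2 (x) (y)) (z)) (m) - (Pl 2 (x) (Pl 2 (y) (Pl 2 (z) (m))) - Pl 2 (z) (Pl 2 (x) (Pl 2 (y) (m))) + Pl 2 (y) (Pl 2 (Bl 2 (z) (x)) (m)) - Pl 2 (Bl 2 (y) (z)) (Pl 2 (x) (m)))) + (3:k) • (Pl 0 (Bl 0 (Bl 0 (x) (y)) (z)) (m) - (Pl 0 (x) (Pl 0 (y) (Pl 0 (z) (m))) - Pl 0 (z) (Pl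 0 (x) (Pl 0 (y) (m))) + Pl 0 (y) (Pl 0 (Bl 0 (z) (x)) (m)) - Pl 0 (Bl 0 (y) (z)) (Pl 0 (x) (m)))) - (3:k) • (Pl 1 (Bl 1 (Bl 1 (x) (y)) (z)) (m) - (Pl 1 (x) (Pl 1 (y) (Pl 1 (z) (m))) - Pl 1 (z) (Pl 1 (x) (Pl 1 (y) (m))) + Pl 1 (y) (Pl 1 (Bl 1 (z) (x)) (m)) - Pl 1 (Bl 1 (y) (z)) (Pl 1 (x) (m)))) - (Pl (-1) (Bl (-1) (Bl (-1) (x) (y)) (z)) (m) - (Pl (-1) (x) (Pl (-1) (y) (Pl (-1) (z) (m))) - Pl (-1) (z) (Pl (-1) (x) (Pl (-1) (y) (m))) + Pl (-1) (y) (Pl (-1) (Bl (-1) (z) (x)) (m)) - Pl (-1) (Bl (-1) (y) (z)) (Pl (-1) (x) (m)))))) := by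
      intro u
      simp only [hBl, hPl, ωadd1, ωadd2, ωsmul1, ωsmul2, νadd1, νadd2, νsmul1, νsmul2,
        map_add, map_smul, LinearMap.add_apply, LinearMap.smul_apply]
      module
    have hv := aux_poly_vanish N0 (fun u => Pl u (Bl u (Bl u (x) (y)) (z)) (m) - (Pl u (x) (Pl u (y) (Pl u (z) (m))) - Pl u (z) (Pl u (x) (Pl u (y) (m))) + Pl u (y) (Pl u (Bl u (z) (x)) (m)) - Pl u (Bl u (y) (z)) (Pl u (x) (m)))) hp hz l
    beta_reduce at hv
    linear_combination (norm := module) hv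
  -- Goal 4 (embedding tensor)
  have g4 : ∀ (l : k) (m n : M), Bl l (Tl l m) (Tl l n) = Tl l (Pl l (Tl l m) n) := by
    intro l m n
    have hz : ∀ u : k, (Bl u (Tl u (m)) (Tl u (n)) - Tl u (Pl u (Tl u (m)) (n))) + u • N1 (Bl u (Tl u (m)) (Tl u (n)) - Tl u (Pl u (Tl u (m)) (n))) = 0 := by
      intro u
      have hs := hT (m + u • N0 m) (n + u • N0 n)
      simp only [phiT, phiB, phiP] at hs
      simp only [map_sub, map_add]
      linear_combination (norm := module) hs
    have hp : ∀ u : k, Bl u (Tl u (m)) (Tl u (n)) - Tl u (Pl u (Tl u (m)) (n)) = (Bl 0 (Tl 0 (m)) (Tl 0 (n)) - Tl 0 (Pl 0 (Tl 0 (m)) (n))) + u • ((Bl 1 (Tl 1 (m)) (Tl 1 (n)) - Tl 1 (Pl 1 (Tl 1 (m)) (n))) - (Bl 0 (Tl 0 (m)) (Tl 0 (n)) - Tl 0 (Pl 0 (Tl 0 (m)) (n))) - ((2:k)⁻¹ • ((Bl 1 (Tl 1 (m)) (Tl 1 (n)) - Tl 1 (Pl 1 (Tl 1 (m)) (n)))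 + (Bl (-1) (Tl (-1) (m)) (Tl (-1) (n)) - Tl (-1) (Pl (-1) (Tl (-1) (m)) (n)))) - (Bl 0 (Tl 0 (m)) (Tl 0 (n)) - Tl 0 (Pl 0 (Tl 0 (m)) (n)))) - ((6:k)⁻¹ • ((Bl 2 (Tl 2 (m)) (Tl 2 (n)) - Tl 2 (Pl 2 (Tl 2 (m)) (n))) + (3:k) • (Bl 0 (Tl 0 (m)) (Tl 0 (n)) - Tl 0 (Pl 0 (Tl 0 (m)) (n))) - (3:k) • (Bl 1 (Tl 1 (m)) (Tl 1 (n)) - Tl 1 (Pl 1 (Tl 1 (m)) (n))) - (Bl (-1) (Tl (-1) (m)) (Tl (-1) (n)) - Tl (-1) (Pl (-1) (Tl (-1) (m)) (n)))))) + (u*u) • ((2:k)⁻¹ • ((Bl 1 (Tl 1 (m)) (Tl 1 (n)) - Tl 1 (Pl 1 (Tl 1 (m)) (n))) + (Bl (-1) (Tl (-1) (m)) (Tl (-1) (n)) - Tl (-1) (Pl (-1) (Tl (-1) (m)) (n)))) - (Bl 0 (Tl 0 (m)) (Tl 0 (n)) - Tl 0 (Pl 0 (Tl 0 (m)) (n))))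 + (u*u*u) • ((6:k)⁻¹ • ((Bl 2 (Tl 2 (m)) (Tl 2 (n)) - Tl 2 (Pl 2 (Tl 2 (m)) (n))) + (3:k) • (Bl 0 (Tl 0 (m)) (Tl 0 (n)) - Tl 0 (Pl 0 (Tl 0 (m)) (n))) - (3:k) • (Bl 1 (Tl 1 (m)) (Tl 1 (n)) - Tl 1 (Pl 1 (Tl 1 (m)) (n))) - (Bl (-1) (Tl (-1) (m)) (Tl (-1) (n)) - Tl (-1) (Pl (-1) (Tl (-1) (m)) (n))))) := by
      intro u
      simp only [hBl, hPl, hTl, ωadd1, ωadd2, ωsmul1, ωsmul2, νadd1, νadd2, νsmul1, νsmul2,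
        θadd, θsmul, map_add, map_smul, LinearMap.add_apply, LinearMap.smul_apply]
      module
    have hv := aux_poly_vanish N1 (fun u => Bl u (Tl u (m)) (Tl u (n)) - Tl u (Pl u (Tl u (m)) (n))) hp hz l
    beta_reduce at hv
    linear_combination (norm := module) hv
  exact fun l => ⟨g1 l, g2 l, g3 l, g4 l⟩
end
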